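/- arXiv:1711.09632 — 10 statements merged into one kernel-verified Lean document; each statement's English description precedes it below -/
import Mathlib

section
/- If u and v are lower semicontinuous convex functions from ℝⁿ to ℝ ∪ {+∞}, not identically +∞, and u ∧ v is convex, then (u ∨ v)* = u* ∧ v*; in particular, u* ∧ v* is convex. -/
open Filter Topology MeasureTheory
open scoped RealInnerProductSpace ENNReal Classical

noncomputable section

/-- Euclidean space ℝⁿ. -/
abbrev En (n : ℕ) := EuclideanSpace ℝ (Fin n)

/-- Convexity of an `EReal`-valued function, via convexity of its epigraph. -/
def ConvexFn {n : ℕ} (u : En n → EReal) : Prop :=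
  Convex ℝ {p : En n × ℝ | u p.1 ≤ (p.2 : EReal)}

/-- The subdifferential of `u` at `x`. -/
def subdiff {n : ℕ} (u : En n → EReal) (x : En n) : Set (En n) :=
  {y | ∀ z, u x + (⟪z - x, y⟫ : EReal) ≤ u z}

/-- The convex (Legendre–Fenchel) conjugate of `u`. -/
def conj {n : ℕ} (u : En n → EReal) (y : En n) : EReal :=
  ⨆ x, ((⟪x, y⟫ : EReal) - u x)

/-- Graph of the subdifferential map. -/
def sgraph {n : ℕ} (u : En n → EReal) : Set (En n × En n) :=
  {p | p.2 ∈ subdiff u p.1}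

/-- Parallel set `P_s(u, η)`. -/
def parallelSet {n : ℕ} (u : En n → EReal) (η : Set (En n × En n)) (s : ℝ) : Set (En n) :=
  {z | ∃ p ∈ η, p.2 ∈ subdiff u p.1 ∧ z = p.1 + s • p.2}

/-- Convex indicator function of a set. -/
def indFn {n : ℕ} (K : Set (En n)) (x : En n) : EReal :=
  if x ∈ K then 0 else ⊤

/-- Lipschitz regularization (Pasch–Hausdorff envelope) `reg_r u = (u* + I_{B_{1/r}})*`. -/
def regLip {n : ℕ} (u : En n → EReal) (r : ℝ) : En n → EReal :=
  conj (fun y => conj u y + indFn (Metric.closedBall (0 : En n) (1 / r)) y)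

-- aux lemmas
lemma ereal_le_sub {c A : ℝ} {w : EReal} (h : (c : EReal) < (A : EReal) - w) :
    w ≤ ((A - c : ℝ) : EReal) := by
  induction w using EReal.rec with
  | bot => exact bot_le
  | coe r =>
    rw [← EReal.coe_sub] at h
    exact_mod_cast by linarith [EReal.coe_lt_coe_iff.mp h]
  | top => simp [EReal.sub_top] at h

lemma ereal_sub_ge {c A : ℝ} {w : EReal} (h : w ≤ ((A - c : ℝ) : EReal)) :
    (c : EReal) ≤ (A : EReal) - w := by
  induction w using EReal.rec with
  | bot => rw [EReal.coe_sub_bot]; exact le_top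
  | coe r =>
    rw [← EReal.coe_sub]
    exact_mod_cast by linarith [EReal.coe_le_coe_iff.mp h]
  | top => exact absurd (top_le_iff.mp h) (EReal.coe_ne_top _)

lemma convexFn_conj {n : ℕ} (w : En n → EReal) : ConvexFn (conj w) := by
  intro p hp q hq a b ha hb hab
  simp only [Set.mem_setOf_eq, conj, iSup_le_iff] at hp hq ⊢
  intro x
  have hip : ⟪x, (a • p + b • q).1⟫ = a * ⟪x, p.1⟫ + b * ⟪x, q.1⟫ := by
    rw [Prod.fst_add, Prod.smul_fst, Prod.smul_fst, inner_add_right,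
      real_inner_smul_right, real_inner_smul_right]
  have hsnd : (a • p + b • q).2 = a * p.2 + b * q.2 := rfl
  rw [hip, hsnd]
  have hpx := hp x
  have hqx := hq x
  revert hpx hqx
  induction w x using EReal.rec with
  | bot =>
    intro hpx _
    rw [EReal.coe_sub_bot] at hpx
    exact absurd (top_le_iff.mp hpx) (EReal.coe_ne_top _)
  | coe r =>
    intro hpx hqx
    rw [← EReal.coe_sub] at hpx hqx ⊢
    have h1' := EReal.coe_le_coe_iff.mp hpx
    have h2' := EReal.coe_le_coe_iff.mp hqx
    refine EReal.coe_le_coe_iff.mpr ?_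
    have hr : a * r + b * r = r := by rw [← add_mul, hab, one_mul]
    linarith [mul_le_mul_of_nonneg_left h1' ha, mul_le_mul_of_nonneg_left h2' hb,
      mul_sub a (⟪x, p.1⟫ : ℝ) r, mul_sub b (⟪x, q.1⟫ : ℝ) r]
  | top =>
    intro _ _
    rw [EReal.sub_top]
    exact bot_le

theorem conj_sup (n : ℕ) (u v : En n → EReal)
    (hu : ConvexFn u) (hv : ConvexFn v)
    (hul : LowerSemicontinuous u) (hvl : LowerSemicontinuous v)
    (hup : ∃ x, u x ≠ ⊤) (hvp : ∃ x, v x ≠ ⊤)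
    (hmin : ConvexFn (fun x => u x ⊓ v x)) :
    conj (fun x => u x ⊔ v x) = (fun y => conj u y ⊓ conj v y) ∧
      ConvexFn (fun y => conj u y ⊓ conj v y) := by
  have hle : ∀ y, conj (fun x => u x ⊔ v x) y ≤ conj u y ⊓ conj v y := by
    intro y
    simp only [conj]
    refine le_inf (iSup_le fun x => ?_) (iSup_le fun x => ?_)
    · exact (EReal.sub_le_sub le_rfl le_sup_left).trans (le_iSup (fun z => ((⟪z, y⟫ : ℝ) : EReal) - u z) x)
    · exact (EReal.sub_le_sub le_rfl le_sup_right).trans (le_iSup (fun z => ((⟪z, y⟫ : ℝ) : EReal) - v z) x)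
  have key : ∀ y, conj u y ⊓ conj v y ≤ conj (fun x => u x ⊔ v x) y := by
    intro y
    rw [← EReal.ge_of_forall_gt_iff_ge]
    intro c hc
    rw [lt_inf_iff] at hc
    obtain ⟨hc1, hc2⟩ := hc
    rw [conj, lt_iSup_iff] at hc1 hc2
    obtain ⟨x1, hx1⟩ := hc1
    obtain ⟨x2, hx2⟩ := hc2
    set X : ℝ → En n := fun t => (1 - t) • x1 + t • x2 with hX
    set f : ℝ → ℝ := fun t => ⟪X t, y⟫ - c with hf
    have hXcont : Continuous X := by
      exact ((continuous_const.sub continuous_id).smul continuous_const).add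
        (continuous_id.smul continuous_const)
    have hfcont : Continuous f := ((hXcont.inner continuous_const)).sub continuous_const
    have hX0 : X 0 = x1 := by simp [hX]
    have hX1 : X 1 = x2 := by simp [hX]
    have hu1 : u (X 0) ≤ ((f 0 : ℝ) : EReal) := by
      rw [hX0]
      have : f 0 = ⟪x1, y⟫ - c := by rw [hf]; simp [hX0]
      rw [this]
      exact ereal_le_sub hx1
    have hv1 : v (X 1) ≤ ((f 1 : ℝ) : EReal) := by
      rw [hX1]
      have : f 1 = ⟪x2, y⟫ - c := by rw [hf]; simp [hX1]
      rw [this]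
      exact ereal_le_sub hx2
    have hcov : ∀ t ∈ Set.Icc (0:ℝ) 1, (u (X t) ⊓ v (X t)) ≤ ((f t : ℝ) : EReal) := by
      intro t ht
      have h1 : ((x1, (⟪x1, y⟫ - c : ℝ)) : En n × ℝ) ∈
          {p : En n × ℝ | (fun x => u x ⊓ v x) p.1 ≤ (p.2 : EReal)} :=
        inf_le_left.trans (ereal_le_sub hx1)
      have h2 : ((x2, (⟪x2, y⟫ - c : ℝ)) : En n × ℝ) ∈
          {p : En n × ℝ | (fun x => u x ⊓ v x) p.1 ≤ (p.2 : EReal)} :=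
        inf_le_right.trans (ereal_le_sub hx2)
      have hcomb := hmin h1 h2 (by linarith [ht.2] : (0:ℝ) ≤ 1 - t) ht.1 (by ring)
      simp only [Set.mem_setOf_eq] at hcomb
      have hft : f t = (1 - t) * (⟪x1, y⟫ - c) + t * (⟪x2, y⟫ - c) := by
        simp only [hf, hX, inner_add_left, real_inner_smul_left]
        ring
      rw [hft]
      exact hcomb
    set T : Set ℝ := {t : ℝ | u (X t) ≤ ((f t : ℝ) : EReal)} with hT
    set S : Set ℝ := {t : ℝ | v (X t) ≤ ((f t : ℝ) : EReal)} with hS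
    have hclosed : ∀ (w : En n → EReal), LowerSemicontinuous w →
        IsClosed {t : ℝ | w (X t) ≤ ((f t : ℝ) : EReal)} := by
      intro w hw
      rw [← isOpen_compl_iff, isOpen_iff_mem_nhds]
      intro t ht
      simp only [Set.mem_compl_iff, Set.mem_setOf_eq, not_le] at ht
      obtain ⟨z, hz1, hz2⟩ := exists_between ht
      have h1 : ∀ᶠ s in 𝓝 t, z < w (X s) :=
        (hXcont.continuousAt).eventually (hw (X t) z hz2)
      have h2 : ∀ᶠ s in 𝓝 t, ((f s : ℝ) : EReal) < z := by
        have hten : Filter.Tendsto (fun s => ((f s : ℝ) : EReal)) (𝓝 t)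
            (𝓝 ((f t : ℝ) : EReal)) :=
          ((continuous_coe_real_ereal.comp hfcont)).continuousAt
        exact hten.eventually_lt tendsto_const_nhds hz1
      filter_upwards [h1, h2] with s hs1 hs2
      simp only [Set.mem_compl_iff, Set.mem_setOf_eq, not_le]
      exact hs2.trans hs1
    have hcover : Set.Icc (0:ℝ) 1 ⊆ T ∪ S := by
      intro t ht
      exact (inf_le_iff.mp (hcov t ht)).imp id id
    obtain ⟨t0, _, ht0T, ht0S⟩ :=
      isPreconnected_closed_iff.mp isPreconnected_Icc T S
        (hclosed u hul) (hclosed v hvl) hcover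
        ⟨0, ⟨le_refl 0, zero_le_one⟩, hu1⟩ ⟨1, ⟨zero_le_one, le_refl 1⟩, hv1⟩
    have hmax : (u (X t0) ⊔ v (X t0)) ≤ ((f t0 : ℝ) : EReal) := sup_le ht0T ht0S
    have hstep : (c : EReal) ≤ ((⟪X t0, y⟫ : ℝ) : EReal) - (u (X t0) ⊔ v (X t0)) := by
      refine ereal_sub_ge ?_
      have : f t0 = ⟪X t0, y⟫ - c := rfl
      rw [← this]
      exact hmax
    exact hstep.trans (le_iSup (fun x => ((⟪x, y⟫ : ℝ) : EReal) - (u x ⊔ v x)) (X t0))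
  have heq : conj (fun x => u x ⊔ v x) = (fun y => conj u y ⊓ conj v y) :=
    funext fun y => le_antisymm (hle y) (key y)
  exact ⟨heq, heq ▸ convexFn_conj _⟩
end
end

section
/- Let C₁ and C₂ be non-empty, closed, convex subsets of ℝⁿ. If C₁ ∪ C₂ is convex, then C₁ ∩ C₂ is non-empty. -/
open Filter Topology MeasureTheory
open scoped RealInnerProductSpace ENNReal Classical

noncomputable section

theorem closed_convex_union_inter (n : ℕ) (C₁ C₂ : Set (En n))
    (h1 : C₁.Nonempty) (h2 : C₂.Nonempty)
    (hc1 : IsClosed C₁) (hc2 : IsClosed C₂)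
    (hv1 : Convex ℝ C₁) (hv2 : Convex ℝ C₂)
    (hu : Convex ℝ (C₁ ∪ C₂)) :
    (C₁ ∩ C₂).Nonempty := by
  obtain ⟨x, hx⟩ := h1
  obtain ⟨y, hy⟩ := h2
  have hseg : segment ℝ x y ⊆ C₁ ∪ C₂ :=
    hu.segment_subset (Or.inl hx) (Or.inr hy)
  have hpre : IsPreconnected (segment ℝ x y) := (convex_segment x y).isPreconnected
  have := (isPreconnected_closed_iff.mp hpre) C₁ C₂ hc1 hc2 hseg
    ⟨x, left_mem_segment ℝ x y, hx⟩ ⟨y, right_mem_segment ℝ x y, hy⟩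
  obtain ⟨z, _, hz⟩ := this
  exact ⟨z, hz⟩
end
end

section
/- Let u, v : ℝⁿ → ℝ ∪ {+∞} be lower semicontinuous convex functions, not identically +∞, such that u ∧ v is convex. If u ∨ v ≥ 0 on ℝⁿ, then u ≥ 0 on ℝⁿ or v ≥ 0 on ℝⁿ. -/
open Filter Topology MeasureTheory
open scoped RealInnerProductSpace ENNReal Classical

noncomputable section

/-!
Suppose `u a < 0` and `v b < 0`, and pick a real `c < 0` above both values. Since `u ∧ v` is
convex, its sublevel set `{u ∧ v ≤ c}` contains the segment `[a, b]`, so the segment is covered by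
the sublevel sets `{u ≤ c}` and `{v ≤ c}`. These are closed by lower semicontinuity and disjoint
because `u ∨ v ≥ 0 > c`, and each meets the segment (at `a`, resp. `b`): this contradicts the
connectedness of `[a, b]`.
-/

theorem ConvexFn.convex_setOf_le {n : ℕ} {w : En n → EReal} (hw : ConvexFn w) (c : ℝ) :
    Convex ℝ {x | w x ≤ c} := by
  intro x hx y hy s t hs ht hst
  have h := hw (show (x, c) ∈ _ from hx) (show (y, c) ∈ _ from hy) hs ht hst
  simp only [Set.mem_ofPred_eq, Prod.fst_add, Prod.snd_add, Prod.smul_fst, Prod.smul_snd,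
    smul_eq_mul, ← add_mul, hst, one_mul] at h
  exact h

theorem IsPreconnected.forall_le_or_forall_le_of_lowerSemicontinuous {X β : Type*}
    [TopologicalSpace X] [LinearOrder β] {f g : X → β} {s : Set X} {c : β}
    (hs : IsPreconnected s) (hf : LowerSemicontinuous f) (hg : LowerSemicontinuous g)
    (hinf : ∀ x ∈ s, f x ⊓ g x ≤ c) (hsup : ∀ x ∈ s, c < f x ⊔ g x) :
    (∀ x ∈ s, f x ≤ c) ∨ (∀ x ∈ s, g x ≤ c) := by
  by_contra! ⟨⟨x, hxs, hfx⟩, y, hys, hgy⟩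
  have hgx : g x ≤ c := (inf_le_iff.mp (hinf x hxs)).resolve_left hfx.not_ge
  have hfy : f y ≤ c := (inf_le_iff.mp (hinf y hys)).resolve_right hgy.not_ge
  obtain ⟨z, hzs, hfz, hgz⟩ := isPreconnected_closed_iff.mp hs _ _
    (hf.isClosed_preimage c) (hg.isClosed_preimage c) (fun z hz => inf_le_iff.mp (hinf z hz))
    ⟨y, hys, hfy⟩ ⟨x, hxs, hgx⟩
  exact (hsup z hzs).not_ge (sup_le hfz hgz)

theorem sup_nonneg_of_min_convex_general (n : ℕ) (u v : En n → EReal)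
    (hul : LowerSemicontinuous u) (hvl : LowerSemicontinuous v)
    (hmin : ConvexFn (fun x => u x ⊓ v x))
    (hnn : ∀ x, (0 : EReal) ≤ u x ⊔ v x) :
    (∀ x, (0 : EReal) ≤ u x) ∨ (∀ x, (0 : EReal) ≤ v x) := by
  by_contra! ⟨⟨a, ha⟩, b, hb⟩
  obtain ⟨c, hac, hc⟩ := EReal.exists_between_coe_real (sup_lt_iff.mpr ⟨ha, hb⟩)
  obtain ⟨hua, hvb⟩ := sup_le_iff.mp hac.le
  have hseg : segment ℝ a b ⊆ {x | u x ⊓ v x ≤ c} :=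
    (hmin.convex_setOf_le c).segment_subset (inf_le_left.trans hua) (inf_le_right.trans hvb)
  have hsup : ∀ x ∈ segment ℝ a b, (c : EReal) < u x ⊔ v x := fun x _ => hc.trans_le (hnn x)
  rcases (convex_segment a b).isPreconnected.forall_le_or_forall_le_of_lowerSemicontinuous
    hul hvl hseg hsup with hu | hv
  · exact (hsup b (right_mem_segment ℝ a b)).not_ge (sup_le (hu b (right_mem_segment ℝ a b)) hvb)
  · exact (hsup a (left_mem_segment ℝ a b)).not_ge (sup_le hua (hv a (left_mem_segment ℝ a b)))

theorem sup_nonneg_of_min_convex (n : ℕ) (u v : En n → EReal)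
    (hu : ConvexFn u) (hv : ConvexFn v)
    (hul : LowerSemicontinuous u) (hvl : LowerSemicontinuous v)
    (hup : ∃ x, u x ≠ ⊤) (hvp : ∃ x, v x ≠ ⊤)
    (hmin : ConvexFn (fun x => u x ⊓ v x))
    (hnn : ∀ x, (0 : EReal) ≤ u x ⊔ v x) :
    (∀ x, (0 : EReal) ≤ u x) ∨ (∀ x, (0 : EReal) ≤ v x) :=
  sup_nonneg_of_min_convex_general n u v hul hvl hmin hnn
end
end

section
/- Let u, v : ℝ → ℝ ∪ {+∞} be convex and lower semicontinuous with u ∧ v convex. If x̄ ∈ ℝ satisfies u(x̄) < v(x̄), then there exists δ > 0 such that u(x) ≤ v(x) for all x ∈ [x̄ − δ, x̄ + δ]. -/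
open Filter Topology MeasureTheory
open scoped RealInnerProductSpace ENNReal Classical

noncomputable section

/-- Convexity of an `EReal`-valued function on `ℝ`, via convexity of its epigraph. -/
def ConvexFn1 (u : ℝ → EReal) : Prop :=
  Convex ℝ {p : ℝ × ℝ | u p.1 ≤ (p.2 : EReal)}


private lemma core_one_side (u v : ℝ → EReal)
    (hmin : ConvexFn1 (fun x => u x ⊓ v x))
    (hvl : LowerSemicontinuous v)
    (xb : ℝ) (hlt : u xb < v xb)
    (s : ℝ) (hs : s = 1 ∨ s = -1)
    (H : ∀ ε > (0 : ℝ), ∃ x, v x < u x ∧ 0 < s * (x - xb) ∧ s * (x - xb) ≤ ε) :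
    False := by
  obtain ⟨c, hc1, hc2⟩ := EReal.exists_between_coe_real hlt
  obtain ⟨a, ha1, ha2⟩ := EReal.exists_between_coe_real hc1
  have hac : a < c := by exact_mod_cast ha2
  have hball := (hvl xb c hc2)
  rw [Metric.eventually_nhds_iff] at hball
  obtain ⟨δ₁, hδ₁, hball⟩ := hball
  obtain ⟨x₁, hx₁bad, hx₁pos, hx₁le⟩ := H (δ₁ / 2) (by positivity)
  set d : ℝ := s * (x₁ - xb) with hd_def
  have hd : 0 < d := hx₁pos
  have habs : ∀ x : ℝ, |x - xb| = |s * (x - xb)| := by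
    intro x
    rcases hs with h | h <;> simp [h, abs_neg, abs_sub_comm]
  have hdist1 : dist x₁ xb < δ₁ := by
    rw [Real.dist_eq, habs x₁, abs_of_pos hd]
    linarith
  have hvx₁ : (c : EReal) < v x₁ := hball hdist1
  have hvx₁top : v x₁ < ⊤ := lt_of_lt_of_le hx₁bad le_top
  obtain ⟨b, hb1, _⟩ := EReal.exists_between_coe_real hvx₁top
  have hcb : c < b := by exact_mod_cast hvx₁.trans hb1
  set t₀ : ℝ := (c - a) / (b - a) with ht₀_def
  have hba : (0:ℝ) < b - a := by linarith
  have ht₀pos : 0 < t₀ := div_pos (by linarith) hba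
  have ht₀lt : t₀ < 1 := by
    rw [ht₀_def, div_lt_one hba]; linarith
  obtain ⟨x₂, hx₂bad, hx₂pos, hx₂le⟩ := H (min (δ₁ / 2) (t₀ * d / 2))
    (lt_min (by positivity) (by positivity))
  set e : ℝ := s * (x₂ - xb) with he_def
  have he : 0 < e := hx₂pos
  have hdist2 : dist x₂ xb < δ₁ := by
    rw [Real.dist_eq, habs x₂, abs_of_pos he]
    have := hx₂le.trans (min_le_left _ _)
    linarith
  have hvx₂ : (c : EReal) < v x₂ := hball hdist2
  set t : ℝ := (x₂ - xb) / (x₁ - xb) with ht_def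
  have hsne : s ≠ 0 := by rcases hs with h | h <;> simp [h]
  have hte : t = e / d := by
    rw [ht_def, he_def, hd_def, mul_div_mul_left _ _ hsne]
  have htpos : 0 < t := by rw [hte]; positivity
  have htlt : t < t₀ := by
    rw [hte, div_lt_iff₀ hd]
    have h1 : e ≤ t₀ * d / 2 := hx₂le.trans (min_le_right _ _)
    nlinarith
  have htlt1 : t ≤ 1 := le_of_lt (htlt.trans ht₀lt)
  have hx₁ne : x₁ - xb ≠ 0 := by
    intro h
    rw [hd_def, h, mul_zero] at hd
    exact lt_irrefl 0 hd
  -- epigraph memberships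
  have hm₀ : ((xb, a) : ℝ × ℝ) ∈ {p : ℝ × ℝ | u p.1 ⊓ v p.1 ≤ (p.2 : EReal)} := by
    exact le_trans inf_le_left ha1.le
  have hm₁ : ((x₁, b) : ℝ × ℝ) ∈ {p : ℝ × ℝ | u p.1 ⊓ v p.1 ≤ (p.2 : EReal)} := by
    exact le_trans inf_le_right hb1.le
  have hconv := hmin hm₀ hm₁ (by linarith : (0:ℝ) ≤ 1 - t) htpos.le (by ring)
  have hpt1 : (1 - t) * xb + t * x₁ = x₂ := by
    have : t * (x₁ - xb) = x₂ - xb := div_mul_cancel₀ _ hx₁ne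
    linarith [this]
  simp only [Set.mem_setOf_eq, Prod.smul_mk, Prod.mk_add_mk, smul_eq_mul] at hconv
  rw [hpt1] at hconv
  -- u x₂ ⊓ v x₂ = v x₂
  have hinf : u x₂ ⊓ v x₂ = v x₂ := inf_eq_right.mpr hx₂bad.le
  rw [hinf] at hconv
  have hreal : (1 - t) * a + t * b < c := by
    have h1 : t₀ * (b - a) = c - a := div_mul_cancel₀ _ (ne_of_gt hba)
    nlinarith
  have : (c : EReal) < (c : EReal) := by
    calc (c : EReal) < v x₂ := hvx₂
      _ ≤ (((1 - t) * a + t * b : ℝ) : EReal) := hconv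
      _ < (c : EReal) := by exact_mod_cast hreal
  exact lt_irrefl _ this

theorem one_dim_le_near (u v : ℝ → EReal)
    (hu : ConvexFn1 u) (hv : ConvexFn1 v)
    (hul : LowerSemicontinuous u) (hvl : LowerSemicontinuous v)
    (hmin : ConvexFn1 (fun x => u x ⊓ v x))
    (xb : ℝ) (hlt : u xb < v xb) :
    ∃ δ > (0 : ℝ), ∀ x ∈ Set.Icc (xb - δ) (xb + δ), u x ≤ v x := by
  by_contra hcon
  push_neg at hcon
  have H : ∀ δ > (0:ℝ), ∃ x ∈ Set.Icc (xb - δ) (xb + δ), v x < u x := by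
    intro δ hδ
    obtain ⟨x, hx, hxlt⟩ := hcon δ hδ
    exact ⟨x, hx, hxlt⟩
  by_cases hR : ∀ ε > (0:ℝ), ∃ x, v x < u x ∧ 0 < (1:ℝ) * (x - xb) ∧ (1:ℝ) * (x - xb) ≤ ε
  · exact core_one_side u v hmin hvl xb hlt 1 (Or.inl rfl) hR
  · push_neg at hR
    obtain ⟨ε₀, hε₀pos, hε₀⟩ := hR
    apply core_one_side u v hmin hvl xb hlt (-1) (Or.inr rfl)
    intro ε hε
    obtain ⟨x, hx, hxbad⟩ := H (min ε ε₀) (lt_min hε hε₀pos)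
    have hne : x ≠ xb := by
      intro h
      rw [h] at hxbad
      exact absurd hlt (not_lt.mpr hxbad.le)
    have hxlt : x < xb := by
      by_contra hge
      push_neg at hge
      have hgt : 0 < (1:ℝ) * (x - xb) := by
        rcases lt_or_eq_of_le hge with h | h
        · simp; linarith
        · exact absurd h.symm hne
      have hle : (1:ℝ) * (x - xb) ≤ ε₀ := by
        have := hx.2
        have : x - xb ≤ min ε ε₀ := by linarith
        simp only [one_mul]
        exact this.trans (min_le_right _ _)
      exact absurd (hε₀ x hxbad hgt) (not_lt.mpr hle)
    refine ⟨x, hxbad, by simp; linarith, ?_⟩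
    have := hx.1
    have h2 : xb - x ≤ min ε ε₀ := by linarith
    have : (-1:ℝ) * (x - xb) = xb - x := by ring
    rw [this]
    exact h2.trans (min_le_left _ _)
end
end

section
/- Let u, v : ℝⁿ → ℝ ∪ {+∞} be lower semicontinuous convex functions, not identically +∞, with u ∧ v convex. Then for every x ∈ ℝⁿ, ∂(u ∨ v)(x) ∪ ∂(u ∧ v)(x) = ∂u(x) ∪ ∂v(x) and ∂(u ∨ v)(x) ∩ ∂(u ∧ v)(x) = ∂u(x) ∩ ∂v(x). -/
open Filter Topology MeasureTheory
open scoped RealInnerProductSpace ENNReal Classical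

noncomputable section

/-! Subtracting the linear function `⟪y, ·⟫` turns `y ∈ ∂f(x)` into "`x` is a global minimiser
of `f - ⟪y, ·⟫`"; this tilt commutes with `⊔` and `⊓` and preserves lower semicontinuity and
convexity of the epigraph, so it suffices to compare minimisers.

A constant `c ≤ u ⊔ v` lies below `u` or below `v`: otherwise, at a real level `b < c` above a
value of `u` and a value of `v`, the convex, hence preconnected, sublevel set `{u ⊓ v ≤ b}` would
be the union of the disjoint nonempty closed sets `{u ≤ b}` and `{v ≤ b}`. So a minimiser of
`u ⊔ v` minimises `u` or `v`. Conversely, if `x` minimises `u` and `u x < v x`, a point where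
`v < u x` would, by convexity of `u ⊓ v` along the segment to it, give points arbitrarily close
to `x` where `v ≤ u x`, against the lower semicontinuity of `v` at `x`. -/

open Set

lemma IsMinOn.of_le {α β : Type*} [Preorder β] {f g : α → β} {s : Set α} {a : α}
    (hf : IsMinOn f s a) (hfg : ∀ z ∈ s, f z ≤ g z) (ha : g a ≤ f a) : IsMinOn g s a :=
  fun z hz => ha.trans ((hf hz).trans (hfg z hz))

namespace EReal

lemma sup_sub_coe (a b : EReal) (r : ℝ) : (a ⊔ b) - r = (a - r) ⊔ (b - r) :=
  Monotone.map_max fun _ _ h => sub_le_sub h le_rfl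

lemma inf_sub_coe (a b : EReal) (r : ℝ) : (a ⊓ b) - r = (a - r) ⊓ (b - r) :=
  Monotone.map_min fun _ _ h => sub_le_sub h le_rfl

lemma add_coe_sub_coe_le_iff (a b : EReal) (r s : ℝ) :
    a + ((r - s : ℝ) : EReal) ≤ b ↔ a - s ≤ b - r := by
  rw [le_sub_iff_add_le (.inl (coe_ne_bot r)) (.inl (coe_ne_top r)), sub_eq_add_neg a, add_assoc,
    ← coe_neg, ← coe_add, neg_add_eq_sub]

end EReal

lemma LowerSemicontinuous.sub_continuous {X : Type*} [TopologicalSpace X] {f : X → EReal}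
    {g : X → ℝ} (hf : LowerSemicontinuous f) (hg : Continuous g) :
    LowerSemicontinuous fun z => f z - g z := by
  have hg' : LowerSemicontinuous fun z => ((-g z : ℝ) : EReal) :=
    (continuous_coe_real_ereal.comp hg.neg).lowerSemicontinuous
  exact hf.add' hg' fun z => EReal.continuousAt_add (.inr (EReal.coe_ne_bot _))
    (.inr (EReal.coe_ne_top _))

lemma convex_epigraph_sub_linear {E : Type*} [AddCommGroup E] [Module ℝ E] {f : E → EReal}
    (hf : Convex ℝ {p : E × ℝ | f p.1 ≤ p.2}) (ℓ : E →ₗ[ℝ] ℝ) :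
    Convex ℝ {p : E × ℝ | f p.1 - ℓ p.1 ≤ p.2} := by
  let shear : E × ℝ →ₗ[ℝ] E × ℝ :=
    (LinearMap.fst ℝ E ℝ).prod (LinearMap.snd ℝ E ℝ + ℓ ∘ₗ LinearMap.fst ℝ E ℝ)
  have hpre : {p : E × ℝ | f p.1 - ℓ p.1 ≤ p.2} = shear ⁻¹' {p | f p.1 ≤ p.2} := by
    ext p
    simp [shear, EReal.sub_le_iff_le_add (.inl (EReal.coe_ne_bot _)) (.inl (EReal.coe_ne_top _))]
  exact hpre ▸ hf.linear_preimage shear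

lemma convex_sublevel_of_convex_epigraph {E : Type*} [AddCommGroup E] [Module ℝ E]
    {f : E → EReal} (hf : Convex ℝ {p : E × ℝ | f p.1 ≤ p.2}) (b : ℝ) :
    Convex ℝ {z | f z ≤ b} := by
  intro x hx y hy s t hs ht hst
  have := hf (x := (x, b)) (y := (y, b)) hx hy hs ht hst
  simpa [← add_mul, hst] using this

lemma forall_le_or_forall_le_of_le_sup {X : Type*} [TopologicalSpace X] {u v : X → EReal}
    (hu : LowerSemicontinuous u) (hv : LowerSemicontinuous v)
    (hconn : ∀ b : ℝ, IsPreconnected {z | u z ⊓ v z ≤ b}) {c : EReal}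
    (hc : ∀ z, c ≤ u z ⊔ v z) : (∀ z, c ≤ u z) ∨ (∀ z, c ≤ v z) := by
  by_contra! ⟨⟨z₁, hz₁⟩, ⟨z₂, hz₂⟩⟩
  obtain ⟨b, hb, hbc⟩ := EReal.lt_iff_exists_real_btwn.1 (max_lt hz₁ hz₂)
  have hsep : ∀ z, u z ≤ b → v z ≤ b → False := fun z hzu hzv =>
    (hc z).not_gt ((sup_le hzu hzv).trans_lt hbc)
  rcases isPreconnected_iff_subset_of_disjoint_closed.1 (hconn b) _ _ (hu.isClosed_preimage b)
    (hv.isClosed_preimage b) (fun z (hz : u z ⊓ v z ≤ b) => min_le_iff.1 hz)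
    (eq_empty_of_forall_notMem fun z ⟨_, hzu, hzv⟩ => hsep z hzu hzv) with h | h
  · have hz₂ : v z₂ ≤ b := (le_max_right _ _).trans hb.le
    exact hsep z₂ (h (show u z₂ ⊓ v z₂ ≤ b from inf_le_right.trans hz₂)) hz₂
  · have hz₁ : u z₁ ≤ b := (le_max_left _ _).trans hb.le
    exact hsep z₁ hz₁ (h (show u z₁ ⊓ v z₁ ≤ b from inf_le_left.trans hz₁))

lemma isMinOn_inf_iff_of_eq {α : Type*} {u v : α → EReal} {x : α} (heq : u x = v x) :
    IsMinOn (fun z => u z ⊓ v z) univ x ↔ IsMinOn u univ x ∧ IsMinOn v univ x :=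
  ⟨fun h => ⟨h.of_le (fun _ _ => inf_le_left) (le_inf le_rfl heq.le),
    h.of_le (fun _ _ => inf_le_right) (le_inf heq.ge le_rfl)⟩, fun h => h.1.inf h.2⟩

section Minimizers

variable {X : Type*} [TopologicalSpace X] {u v : X → EReal} {x : X}

lemma isMinOn_sup_iff_of_lt (hu : LowerSemicontinuous u) (hv : LowerSemicontinuous v)
    (hconn : ∀ b : ℝ, IsPreconnected {z | u z ⊓ v z ≤ b}) (hlt : u x < v x) :
    IsMinOn (fun z => u z ⊔ v z) univ x ↔ IsMinOn v univ x := by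
  refine ⟨fun h => ?_, fun h => h.of_le (fun _ _ => le_sup_right) (sup_le hlt.le le_rfl)⟩
  rcases forall_le_or_forall_le_of_le_sup hu hv hconn (isMinOn_univ_iff.1 h) with hle | hle
  · exact absurd (le_sup_right.trans (hle x)) hlt.not_ge
  · exact isMinOn_univ_iff.2 fun z => le_sup_right.trans (hle z)

lemma isMinOn_sup_iff_of_eq (hu : LowerSemicontinuous u) (hv : LowerSemicontinuous v)
    (hconn : ∀ b : ℝ, IsPreconnected {z | u z ⊓ v z ≤ b}) (heq : u x = v x) :
    IsMinOn (fun z => u z ⊔ v z) univ x ↔ IsMinOn u univ x ∨ IsMinOn v univ x := by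
  refine ⟨fun h => ?_, ?_⟩
  · exact (forall_le_or_forall_le_of_le_sup hu hv hconn (isMinOn_univ_iff.1 h)).imp
      (fun hle => isMinOn_univ_iff.2 fun z => le_sup_left.trans (hle z))
      (fun hle => isMinOn_univ_iff.2 fun z => le_sup_right.trans (hle z))
  · rintro (h | h)
    · exact h.of_le (fun _ _ => le_sup_left) (sup_le le_rfl heq.ge)
    · exact h.of_le (fun _ _ => le_sup_right) (sup_le heq.le le_rfl)

end Minimizers

section Convex

variable {E : Type*} [AddCommGroup E] [Module ℝ E] [TopologicalSpace E] [ContinuousAdd E]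
  [ContinuousSMul ℝ E] {u v : E → EReal}

open AffineMap in
lemma IsMinOn.inf_of_lt (hv : LowerSemicontinuous v)
    (hconv : Convex ℝ {p : E × ℝ | u p.1 ⊓ v p.1 ≤ p.2}) {x : E} (hx : IsMinOn u univ x)
    (hlt : u x < v x) : IsMinOn (fun z => u z ⊓ v z) univ x := by
  rw [isMinOn_univ_iff] at hx ⊢
  intro z
  rw [inf_eq_left.2 hlt.le]
  refine le_inf (hx z) (not_lt.1 fun hz => ?_)
  obtain ⟨a, ha⟩ : ∃ a : ℝ, (a : EReal) = u x :=
    ⟨_, EReal.coe_toReal hlt.ne_top (hz.trans_le' bot_le).ne_bot⟩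
  obtain ⟨b, hzb, hba⟩ := EReal.lt_iff_exists_real_btwn.1 hz
  have hba' : b < a := by exact_mod_cast hba.trans_eq ha.symm
  have hseg : ∀ t ∈ Ioc (0 : ℝ) 1, v (lineMap x z t) ≤ a := by
    intro t ht
    have hmem : u (lineMap x z t) ⊓ v (lineMap x z t) ≤ (lineMap a b t : ℝ) := by
      simpa using hconv.lineMap_mem (x := (x, a)) (y := (z, b))
        (show u x ⊓ v x ≤ a from inf_le_left.trans ha.ge)
        (show u z ⊓ v z ≤ b from inf_le_right.trans hzb.le) ⟨ht.1.le, ht.2⟩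
    have hchord : lineMap a b t < a := by
      rw [lineMap_apply_ring']; nlinarith [ht.1]
    have hchord' : ((lineMap a b t : ℝ) : EReal) < a := by exact_mod_cast hchord
    rcases min_le_iff.1 hmem with hut | hvt
    · exact absurd (hx (lineMap x z t)) (hut.trans_lt (hchord'.trans_eq ha)).not_ge
    · exact hvt.trans hchord'.le
  have htend : Filter.Tendsto (fun t : ℝ => lineMap x z t) (𝓝[>] 0) (𝓝 x) := by
    have hcont : Continuous fun t : ℝ => lineMap x z t := by
      simp only [lineMap_apply_module']; fun_prop
    simpa using hcont.tendsto 0 |>.mono_left nhdsWithin_le_nhds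
  have hvx : v x ≤ a :=
    (hv.isClosed_preimage a).mem_of_tendsto htend (mem_of_superset (Ioc_mem_nhdsGT one_pos) hseg)
  exact (hvx.trans_eq ha).not_gt hlt

lemma isMinOn_inf_iff_of_lt (hv : LowerSemicontinuous v)
    (hconv : Convex ℝ {p : E × ℝ | u p.1 ⊓ v p.1 ≤ p.2}) {x : E} (hlt : u x < v x) :
    IsMinOn (fun z => u z ⊓ v z) univ x ↔ IsMinOn u univ x :=
  ⟨fun h => h.of_le (fun _ _ => inf_le_left) (le_inf le_rfl hlt.le),
    fun h => h.inf_of_lt hv hconv hlt⟩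

theorem isMinOn_sup_or_inf_iff (hu : LowerSemicontinuous u) (hv : LowerSemicontinuous v)
    (hconv : Convex ℝ {p : E × ℝ | u p.1 ⊓ v p.1 ≤ p.2}) (x : E) :
    (IsMinOn (fun z => u z ⊔ v z) univ x ∨ IsMinOn (fun z => u z ⊓ v z) univ x ↔
      IsMinOn u univ x ∨ IsMinOn v univ x) ∧
    (IsMinOn (fun z => u z ⊔ v z) univ x ∧ IsMinOn (fun z => u z ⊓ v z) univ x ↔
      IsMinOn u univ x ∧ IsMinOn v univ x) := by
  wlog hle : u x ≤ v x generalizing u v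
  · have := this hv hu (by simpa only [inf_comm] using hconv) (le_of_not_ge hle)
    simp only [sup_comm (v _), inf_comm (v _)] at this
    tauto
  have hconn (b : ℝ) : IsPreconnected {z | u z ⊓ v z ≤ b} :=
    (convex_sublevel_of_convex_epigraph hconv b).isPreconnected
  rcases hle.lt_or_eq with hlt | heq
  · rw [isMinOn_sup_iff_of_lt hu hv hconn hlt, isMinOn_inf_iff_of_lt hv hconv hlt]
    tauto
  · rw [isMinOn_sup_iff_of_eq hu hv hconn heq, isMinOn_inf_iff_of_eq heq]
    tauto

end Convex

lemma mem_subdiff_iff_isMinOn {n : ℕ} {f : En n → EReal} {x y : En n} :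
    y ∈ subdiff f x ↔ IsMinOn (fun z => f z - ⟪y, z⟫) univ x := by
  simp only [subdiff, mem_ofPred_eq, isMinOn_univ_iff, inner_sub_left, real_inner_comm y,
    EReal.add_coe_sub_coe_le_iff]

theorem subdiff_inclusion_exclusion_general (n : ℕ) (u v : En n → EReal)
    (hul : LowerSemicontinuous u) (hvl : LowerSemicontinuous v)
    (hmin : ConvexFn (fun x => u x ⊓ v x)) :
    ∀ x : En n,
      subdiff (fun z => u z ⊔ v z) x ∪ subdiff (fun z => u z ⊓ v z) x
        = subdiff u x ∪ subdiff v x ∧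
      subdiff (fun z => u z ⊔ v z) x ∩ subdiff (fun z => u z ⊓ v z) x
        = subdiff u x ∩ subdiff v x := by
  intro x
  have htilt (y : En n) := isMinOn_sup_or_inf_iff (u := fun z => u z - ⟪y, z⟫)
    (v := fun z => v z - ⟪y, z⟫) (hul.sub_continuous (by fun_prop))
    (hvl.sub_continuous (by fun_prop))
    (by simpa only [EReal.inf_sub_coe, innerₛₗ_apply_apply] using
      convex_epigraph_sub_linear (f := fun z => u z ⊓ v z) hmin (innerₛₗ ℝ y)) x
  constructor <;> ext y <;>
    simp only [mem_union, mem_inter_iff, mem_subdiff_iff_isMinOn, EReal.sup_sub_coe,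
      EReal.inf_sub_coe]
  exacts [(htilt y).1, (htilt y).2]

theorem subdiff_inclusion_exclusion (n : ℕ) (u v : En n → EReal)
    (hu : ConvexFn u) (hv : ConvexFn v)
    (hul : LowerSemicontinuous u) (hvl : LowerSemicontinuous v)
    (hup : ∃ x, u x ≠ ⊤) (hvp : ∃ x, v x ≠ ⊤)
    (hmin : ConvexFn (fun x => u x ⊓ v x)) :
    ∀ x : En n,
      subdiff (fun z => u z ⊔ v z) x ∪ subdiff (fun z => u z ⊓ v z) x
        = subdiff u x ∪ subdiff v x ∧
      subdiff (fun z => u z ⊔ v z) x ∩ subdiff (fun z => u z ⊓ v z) x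
        = subdiff u x ∩ subdiff v x :=
  subdiff_inclusion_exclusion_general n u v hul hvl hmin
end
end

section
/- Let u, v : ℝⁿ → ℝ ∪ {+∞} be lower semicontinuous convex functions with u ∧ v convex, and let x ∈ ℝⁿ with u(x) < v(x). Then ∂(u ∧ v)(x) = ∂u(x), and if v(x) < +∞, then ∂(u ∨ v)(x) = ∂v(x). -/
open Filter Topology MeasureTheory
open scoped RealInnerProductSpace ENNReal Classical

noncomputable section

/-! Move from `x` towards `z` along `x_t = x + t • (z - x)`. Convexity of `u ⊓ v` puts
`(u ⊓ v)(x_t)` below the chord from `(x, a)` to `(z, b)` whenever `u x ≤ a` and `v z ≤ b`. If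
moreover `a < v x`, lower semicontinuity keeps `v (x_t)` above that chord for small `t > 0`, so it
is `u (x_t)` that lies below it. A subgradient inequality at `x` (of `u`, or of `u ⊔ v` once
convexity of `v` bounds `v (x_t)` as well) that failed at some `z` would force `u (x_t)` above the
chord. -/

lemma exists_real_between_of_lt_coe {e : EReal} {s : ℝ} (h : e < s) : ∃ b : ℝ, e ≤ b ∧ b < s := by
  obtain ⟨b, heb, hbs⟩ := EReal.exists_between_coe_real h
  exact ⟨b, heb.le, EReal.coe_lt_coe_iff.1 hbs⟩

section

variable {n : ℕ}

lemma ConvexFn.le_segment {f : En n → EReal} (hf : ConvexFn f) {x z : En n} {a b t : ℝ}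
    (ha : f x ≤ a) (hb : f z ≤ b) (ht₀ : 0 ≤ t) (ht₁ : t ≤ 1) :
    f (x + t • (z - x)) ≤ ((1 - t) * a + t * b : ℝ) := by
  have h := hf (show ((x, a) : En n × ℝ) ∈ _ from ha) (show ((z, b) : En n × ℝ) ∈ _ from hb)
    (sub_nonneg.2 ht₁) ht₀ (sub_add_cancel 1 t)
  have hpt : (1 - t) • ((x, a) : En n × ℝ) + t • (z, b) = (x + t • (z - x), (1 - t) * a + t * b) :=
    Prod.ext (show (1 - t) • x + t • z = x + t • (z - x) by module)
      (show (1 - t) • a + t • b = (1 - t) * a + t * b by simp only [smul_eq_mul])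
  rwa [hpt] at h

lemma LowerSemicontinuousAt.eventually_segment_gt {v : En n → EReal} {x : En n}
    (hv : LowerSemicontinuousAt v x) {a : ℝ} (ha : a < v x) (z : En n) (b : ℝ) :
    ∀ᶠ t in 𝓝 (0 : ℝ), (((1 - t) * a + t * b : ℝ) : EReal) < v (x + t • (z - x)) := by
  obtain ⟨c, hac, hcv⟩ := EReal.exists_between_coe_real ha
  have hpath : Tendsto (fun t : ℝ => x + t • (z - x)) (𝓝 0) (𝓝 x) :=
    (by fun_prop : Continuous fun t : ℝ => x + t • (z - x)).tendsto' 0 x (by simp)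
  have hchord : Tendsto (fun t : ℝ => (1 - t) * a + t * b) (𝓝 0) (𝓝 a) :=
    (by fun_prop : Continuous fun t : ℝ => (1 - t) * a + t * b).tendsto' 0 a (by simp)
  filter_upwards [hpath.eventually (hv c hcv),
    hchord.eventually_lt_const (EReal.coe_lt_coe_iff.1 hac)] with t hvt hct
  exact (EReal.coe_lt_coe_iff.2 hct).trans hvt

lemma exists_segment_le_of_convexFn_inf {u v : En n → EReal} {x z : En n} {a b : ℝ}
    (hmin : ConvexFn fun w => u w ⊓ v w) (hv : LowerSemicontinuousAt v x)
    (hux : u x ≤ a) (hav : a < v x) (hvz : v z ≤ b) :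
    ∃ t : ℝ, 0 < t ∧ t ≤ 1 ∧ u (x + t • (z - x)) ≤ ((1 - t) * a + t * b : ℝ) := by
  have hsmall : ∀ᶠ t in 𝓝[>] (0 : ℝ), t ≤ 1 ∧
      (((1 - t) * a + t * b : ℝ) : EReal) < v (x + t • (z - x)) :=
    (Filter.Eventually.and (Iic_mem_nhds zero_lt_one) (hv.eventually_segment_gt hav z b)).filter_mono
      nhdsWithin_le_nhds
  obtain ⟨t, ⟨ht₁, hvt⟩, ht₀⟩ := (hsmall.and self_mem_nhdsWithin).exists
  refine ⟨t, ht₀, ht₁, ?_⟩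
  have hmint := hmin.le_segment (inf_le_left.trans hux) (inf_le_right.trans hvz) ht₀.le ht₁
  exact (inf_le_iff.1 hmint).resolve_right hvt.not_ge

lemma subdiff_subset_of_le {f g : En n → EReal} {x : En n} (hle : ∀ z, g z ≤ f z)
    (heq : g x = f x) : subdiff g x ⊆ subdiff f x :=
  fun _ hy z => heq ▸ (hy z).trans (hle z)

lemma lt_segment_of_mem_subdiff {f : En n → EReal} {x y z : En n} {c b t : ℝ}
    (hy : y ∈ subdiff f x) (hfx : f x = c) (hb : b < c + ⟪z - x, y⟫) (ht : 0 < t) :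
    (((1 - t) * c + t * b : ℝ) : EReal) < f (x + t • (z - x)) := by
  have hsub := hy (x + t • (z - x))
  rw [hfx, add_sub_cancel_left, real_inner_smul_left, ← EReal.coe_add] at hsub
  refine lt_of_lt_of_le (EReal.coe_lt_coe_iff.2 ?_) hsub
  nlinarith

variable {u v : En n → EReal} {x : En n}

lemma subdiff_subset_subdiff_inf (hmin : ConvexFn fun w => u w ⊓ v w)
    (hv : LowerSemicontinuousAt v x) (hlt : u x < v x) :
    subdiff u x ⊆ subdiff (fun w => u w ⊓ v w) x := by
  intro y hy z
  change u x ⊓ v x + _ ≤ u z ⊓ v z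
  rw [inf_eq_left.2 hlt.le]
  refine le_inf (hy z) ?_
  induction hux : u x using EReal.rec with
  | bot => simp
  | top => exact absurd (hux ▸ hlt) not_top_lt
  | coe r =>
    by_contra! hvz
    rw [← EReal.coe_add] at hvz
    obtain ⟨b, hvb, hb⟩ := exists_real_between_of_lt_coe hvz
    obtain ⟨t, ht₀, -, hut⟩ :=
      exists_segment_le_of_convexFn_inf hmin hv hux.le (hux ▸ hlt) hvb
    exact (lt_segment_of_mem_subdiff hy hux hb ht₀).not_ge hut

lemma subdiff_sup_subset_subdiff (hv : ConvexFn v) (hmin : ConvexFn fun w => u w ⊓ v w)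
    (hvl : LowerSemicontinuousAt v x) (hlt : u x < v x) (hvx : v x ≠ ⊤) :
    subdiff (fun w => u w ⊔ v w) x ⊆ subdiff v x := by
  obtain ⟨s, hs⟩ : ∃ s : ℝ, v x = s :=
    ⟨(v x).toReal, (EReal.coe_toReal hvx (bot_le.trans_lt hlt).ne').symm⟩
  intro y hy z
  by_contra! hvz
  rw [hs, ← EReal.coe_add] at hvz
  obtain ⟨b, hvb, hb⟩ := exists_real_between_of_lt_coe hvz
  obtain ⟨a, hua, has⟩ := exists_real_between_of_lt_coe (hs ▸ hlt)
  obtain ⟨t, ht₀, ht₁, hut⟩ :=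
    exists_segment_le_of_convexFn_inf hmin hvl hua (hs ▸ EReal.coe_lt_coe_iff.2 has) hvb
  have hsup : u (x + t • (z - x)) ⊔ v (x + t • (z - x)) ≤ ((1 - t) * s + t * b : ℝ) := by
    refine sup_le (hut.trans (EReal.coe_le_coe_iff.2 ?_)) (hv.le_segment hs.le hvb ht₀.le ht₁)
    nlinarith
  exact (lt_segment_of_mem_subdiff hy ((sup_eq_right.2 hlt.le).trans hs) hb ht₀).not_ge hsup

end

theorem subdiff_of_lt_general (n : ℕ) (u v : En n → EReal)
    (hv : ConvexFn v)
    (hvl : LowerSemicontinuous v)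
    (hmin : ConvexFn (fun x => u x ⊓ v x))
    (x : En n) (hlt : u x < v x) :
    subdiff (fun z => u z ⊓ v z) x = subdiff u x ∧
      (v x ≠ ⊤ → subdiff (fun z => u z ⊔ v z) x = subdiff v x) :=
  ⟨(subdiff_subset_of_le (fun _ => inf_le_left) (inf_eq_left.2 hlt.le)).antisymm
      (subdiff_subset_subdiff_inf hmin (hvl x) hlt),
    fun hvx => (subdiff_sup_subset_subdiff hv hmin (hvl x) hlt hvx).antisymm
      (subdiff_subset_of_le (fun _ => le_sup_right) (sup_eq_right.2 hlt.le).symm)⟩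

theorem subdiff_of_lt (n : ℕ) (u v : En n → EReal)
    (hu : ConvexFn u) (hv : ConvexFn v)
    (hul : LowerSemicontinuous u) (hvl : LowerSemicontinuous v)
    (hmin : ConvexFn (fun x => u x ⊓ v x))
    (x : En n) (hlt : u x < v x) :
    subdiff (fun z => u z ⊓ v z) x = subdiff u x ∧
      (v x ≠ ⊤ → subdiff (fun z => u z ⊔ v z) x = subdiff v x) :=
  subdiff_of_lt_general n u v hv hvl hmin x hlt
end
end

section
/- Let u, v : ℝⁿ → ℝ ∪ {+∞} be lower semicontinuous convex functions with u ∧ v convex, and let x ∈ ℝⁿ with u(x) = v(x) < +∞. Then ∂(u ∨ v)(x) = ∂u(x) ∪ ∂v(x) and ∂(u ∧ v)(x) = ∂u(x) ∩ ∂v(x). -/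
open Filter Topology MeasureTheory
open scoped RealInnerProductSpace ENNReal Classical

noncomputable section

/-- For `f` lsc, `g, c` continuous, the set `{t | f (g t) ≤ c t}` is closed. -/
lemma closed_aux {n : ℕ} (f : En n → EReal) (hf : LowerSemicontinuous f)
    (g : ℝ → En n) (hg : Continuous g) (c : ℝ → ℝ) (hc : Continuous c) :
    IsClosed {t : ℝ | f (g t) ≤ ((c t : ℝ) : EReal)} := by
  rw [← isOpen_compl_iff, isOpen_iff_mem_nhds]
  intro t₀ ht₀
  simp only [Set.mem_compl_iff, Set.mem_setOf_eq, not_le] at ht₀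
  obtain ⟨b, hb1, hb2⟩ := EReal.exists_between_coe_real ht₀
  have h1 : ∀ᶠ t in 𝓝 t₀, (b : EReal) < f (g t) :=
    (hg.tendsto t₀).eventually (hf (g t₀) b hb2)
  have h2 : ∀ᶠ t in 𝓝 t₀, c t < b :=
    (hc.tendsto t₀).eventually (Filter.Tendsto.eventually_lt_const (EReal.coe_lt_coe_iff.1 hb1)
      tendsto_id) |>.mono (fun t ht => ht)
  filter_upwards [h1, h2] with t h1t h2t
  simp only [Set.mem_compl_iff, Set.mem_setOf_eq, not_le]
  exact lt_trans (EReal.coe_lt_coe_iff.2 h2t) h1t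

lemma key {n : ℕ} (u v : En n → EReal)
    (hul : LowerSemicontinuous u) (hvl : LowerSemicontinuous v)
    (hmin : ConvexFn (fun x => u x ⊓ v x))
    (x y : En n) (c : ℝ)
    (hy : ∀ z, ((c + ⟪z - x, y⟫ : ℝ) : EReal) ≤ u z ⊔ v z) :
    (∀ z, ((c + ⟪z - x, y⟫ : ℝ) : EReal) ≤ u z) ∨
    (∀ z, ((c + ⟪z - x, y⟫ : ℝ) : EReal) ≤ v z) := by
  by_contra h
  push_neg at h
  obtain ⟨⟨z₁, hz₁⟩, ⟨z₂, hz₂⟩⟩ := h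
  set L : En n → ℝ := fun z => c + ⟪z - x, y⟫ with hLdef
  obtain ⟨a₁, ha₁, ha₁'⟩ := EReal.exists_between_coe_real hz₁
  obtain ⟨a₂, ha₂, ha₂'⟩ := EReal.exists_between_coe_real hz₂
  have ha₁'' : a₁ < L z₁ := EReal.coe_lt_coe_iff.1 ha₁'
  have ha₂'' : a₂ < L z₂ := EReal.coe_lt_coe_iff.1 ha₂'
  set δ : ℝ := min (L z₁ - a₁) (L z₂ - a₂) with hδdef
  have hδpos : 0 < δ := lt_min (by linarith) (by linarith)
  set p : ℝ → En n := fun t => z₁ + t • (z₂ - z₁) with hpdef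
  have hp : ∀ t : ℝ, p t = (1 - t) • z₁ + t • z₂ := by
    intro t; simp only [hpdef]; module
  have hL : ∀ t : ℝ, L (p t) = (1 - t) * L z₁ + t * L z₂ := by
    intro t
    have hv : p t - x = (z₁ - x) + t • ((z₂ - x) - (z₁ - x)) := by
      simp only [hpdef]; module
    simp only [hLdef]
    rw [hv]
    simp only [inner_add_left, inner_sub_left, real_inner_smul_left]
    ring
  -- gap along the segment
  have hgap : ∀ t ∈ Set.Icc (0:ℝ) 1, u (p t) ⊓ v (p t) ≤ ((L (p t) - δ : ℝ) : EReal) := by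
    intro t ht
    have hm1 : ((z₁, a₁) : En n × ℝ) ∈ {p : En n × ℝ | u p.1 ⊓ v p.1 ≤ (p.2 : EReal)} :=
      le_trans inf_le_left ha₁.le
    have hm2 : ((z₂, a₂) : En n × ℝ) ∈ {p : En n × ℝ | u p.1 ⊓ v p.1 ≤ (p.2 : EReal)} :=
      le_trans inf_le_right ha₂.le
    have hcv := hmin hm1 hm2 (by linarith [ht.2] : (0:ℝ) ≤ 1 - t) ht.1 (by ring)
    simp only [Prod.smul_mk, Prod.mk_add_mk, smul_eq_mul, Set.mem_setOf_eq] at hcv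
    have hle : (1 - t) * a₁ + t * a₂ ≤ L (p t) - δ := by
      have e1 : a₁ ≤ L z₁ - δ := by
        have := min_le_left (L z₁ - a₁) (L z₂ - a₂); linarith [hδdef ▸ this]
      have e2 : a₂ ≤ L z₂ - δ := by
        have := min_le_right (L z₁ - a₁) (L z₂ - a₂); linarith [hδdef ▸ this]
      have := hL t
      nlinarith [ht.1, ht.2]
    calc u (p t) ⊓ v (p t) ≤ (((1 - t) * a₁ + t * a₂ : ℝ) : EReal) := by
          rw [hp t]; exact hcv
      _ ≤ ((L (p t) - δ : ℝ) : EReal) := EReal.coe_le_coe_iff.2 hle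
  set A : Set ℝ := {t | t ∈ Set.Icc (0:ℝ) 1 ∧ u (p t) ≤ ((L (p t) - δ : ℝ) : EReal)} with hAdef
  set B : Set ℝ := {t | t ∈ Set.Icc (0:ℝ) 1 ∧ v (p t) ≤ ((L (p t) - δ : ℝ) : EReal)} with hBdef
  have hcover : ∀ t ∈ Set.Icc (0:ℝ) 1, t ∈ A ∨ t ∈ B := by
    intro t ht
    rcases inf_le_iff.1 (hgap t ht) with h | h
    · exact Or.inl ⟨ht, h⟩
    · exact Or.inr ⟨ht, h⟩
  have hdisj : ∀ t, t ∈ A → t ∈ B → False := by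
    intro t htA htB
    have h1 : u (p t) ⊔ v (p t) ≤ ((L (p t) - δ : ℝ) : EReal) := sup_le htA.2 htB.2
    have h2 := hy (p t)
    have : ((L (p t) : ℝ) : EReal) ≤ ((L (p t) - δ : ℝ) : EReal) := le_trans h2 h1
    have := EReal.coe_le_coe_iff.1 this
    linarith
  have hp0 : p 0 = z₁ := by simp [hpdef]
  have hp1 : p 1 = z₂ := by simp [hpdef]
  have h0A : (0:ℝ) ∈ A := by
    refine ⟨⟨le_refl _, zero_le_one⟩, ?_⟩
    rw [hp0]
    exact le_trans ha₁.le (EReal.coe_le_coe_iff.2 (by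
      have := min_le_left (L z₁ - a₁) (L z₂ - a₂); linarith [hδdef ▸ this]))
  have h1B : (1:ℝ) ∈ B := by
    refine ⟨⟨zero_le_one, le_refl _⟩, ?_⟩
    rw [hp1]
    exact le_trans ha₂.le (EReal.coe_le_coe_iff.2 (by
      have := min_le_right (L z₁ - a₁) (L z₂ - a₂); linarith [hδdef ▸ this]))
  -- the sup of A
  have hAne : A.Nonempty := ⟨0, h0A⟩
  have hAbdd : BddAbove A := ⟨1, fun t ht => ht.1.2⟩
  set s : ℝ := sSup A with hsdef
  have hs0 : 0 ≤ s := le_csSup hAbdd h0A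
  have hs1 : s ≤ 1 := csSup_le hAne (fun t ht => ht.1.2)
  have hsIcc : s ∈ Set.Icc (0:ℝ) 1 := ⟨hs0, hs1⟩
  have hpc : Continuous p := by
    apply Continuous.add continuous_const
    exact (continuous_id.smul continuous_const)
  have hLc : Continuous (fun t : ℝ => L (p t) - δ) := by
    have h : (fun t : ℝ => L (p t) - δ) = fun t => ((1 - t) * L z₁ + t * L z₂) - δ := by
      funext t; rw [hL]
    rw [h]
    exact (((continuous_const.sub continuous_id).mul continuous_const).add
      (continuous_id.mul continuous_const)).sub continuous_const
  have hCu : IsClosed {t : ℝ | u (p t) ≤ ((L (p t) - δ : ℝ) : EReal)} :=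
    closed_aux u hul p hpc _ hLc
  have hCv : IsClosed {t : ℝ | v (p t) ≤ ((L (p t) - δ : ℝ) : EReal)} :=
    closed_aux v hvl p hpc _ hLc
  -- s is in the closure of A
  have hsA : u (p s) ≤ ((L (p s) - δ : ℝ) : EReal) := by
    have h1 : s ∈ closure A := csSup_mem_closure hAne hAbdd
    have h2 : closure A ⊆ {t : ℝ | u (p t) ≤ ((L (p t) - δ : ℝ) : EReal)} :=
      closure_minimal (fun t ht => ht.2) hCu
    exact h2 h1
  -- s is in the closure of B
  have hsB : v (p s) ≤ ((L (p s) - δ : ℝ) : EReal) := by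
    have h1 : s ∈ closure B := by
      rcases eq_or_lt_of_le hs1 with h | h
      · rw [h]; exact subset_closure h1B
      · have hsub : Set.Ioc s 1 ⊆ B := by
          intro t ht
          have htIcc : t ∈ Set.Icc (0:ℝ) 1 := ⟨le_of_lt (lt_of_le_of_lt hs0 ht.1), ht.2⟩
          rcases hcover t htIcc with hA | hB
          · exact absurd (le_csSup hAbdd hA) (not_le.2 ht.1)
          · exact hB
        have : s ∈ closure (Set.Ioc s 1) := by
          rw [closure_Ioc (ne_of_lt h)]
          exact ⟨le_refl _, le_of_lt h⟩
        exact closure_mono hsub this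
    have h2 : closure B ⊆ {t : ℝ | v (p t) ≤ ((L (p t) - δ : ℝ) : EReal)} :=
      closure_minimal (fun t ht => ht.2) hCv
    exact h2 h1
  exact hdisj s ⟨hsIcc, hsA⟩ ⟨hsIcc, hsB⟩

theorem subdiff_of_eq (n : ℕ) (u v : En n → EReal)
    (hu : ConvexFn u) (hv : ConvexFn v)
    (hul : LowerSemicontinuous u) (hvl : LowerSemicontinuous v)
    (hmin : ConvexFn (fun x => u x ⊓ v x))
    (x : En n) (heq : u x = v x) (hfin : v x ≠ ⊤) :
    subdiff (fun z => u z ⊔ v z) x = subdiff u x ∪ subdiff v x ∧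
      subdiff (fun z => u z ⊓ v z) x = subdiff u x ∩ subdiff v x := by
  have hsx : u x ⊔ v x = u x := by rw [heq]; exact sup_idem _
  have hix : u x ⊓ v x = u x := by rw [heq]; exact inf_idem _
  constructor
  · -- sup part
    ext y
    simp only [subdiff, Set.mem_setOf_eq, Set.mem_union]
    constructor
    · intro hy
      by_cases hbot : v x = ⊥
      · have hux : u x = ⊥ := heq.trans hbot
        left
        intro z
        rw [hux, EReal.bot_add]
        exact bot_le
      · obtain ⟨c, hc⟩ : ∃ c : ℝ, v x = (c : EReal) :=
          ⟨(v x).toReal, (EReal.coe_toReal hfin hbot).symm⟩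
        have hux : u x = (c : EReal) := heq.trans hc
        have hy' : ∀ z, ((c + ⟪z - x, y⟫ : ℝ) : EReal) ≤ u z ⊔ v z := by
          intro z
          have h := hy z
          rwa [hsx, hux, ← EReal.coe_add] at h
        rcases key u v hul hvl hmin x y c hy' with h | h
        · left; intro z; rw [hux, ← EReal.coe_add]; exact h z
        · right; intro z; rw [hc, ← EReal.coe_add]; exact h z
    · rintro (h | h) z
      · rw [hsx]
        exact le_trans (h z) le_sup_left
      · rw [hsx, heq]
        exact le_trans (h z) le_sup_right
  · -- inf part
    ext y
    simp only [subdiff, Set.mem_setOf_eq, Set.mem_inter_iff]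
    constructor
    · intro hy
      constructor <;> intro z
      · have h := hy z
        rw [hix] at h
        exact le_trans h inf_le_left
      · have h := hy z
        rw [hix, heq] at h
        exact le_trans h inf_le_right
    · rintro ⟨h1, h2⟩ z
      rw [hix]
      refine le_inf (h1 z) ?_
      rw [heq]
      exact h2 z
end
end

section
/- Let u, v : ℝⁿ → ℝ ∪ {+∞} be lower semicontinuous convex functions with u ∧ v convex. Then the subdifferential graphs satisfy Γ_{u∨v} ∪ Γ_{u∧v} = Γ_u ∪ Γ_v and Γ_{u∨v} ∩ Γ_{u∧v} = Γ_u ∩ Γ_v. -/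
open Filter Topology MeasureTheory
open scoped RealInnerProductSpace ENNReal Classical

noncomputable section

/-! Everything rests on one connectedness argument. If `u ⊓ v` is convex, `u x ≤ a` and
`v z ≤ b`, the chord from `(x, a)` to `(z, b)` lies above `u ⊓ v` on `[x, z]`; the parameters
where it lies above `u`, resp. above `v`, form two closed sets (lower semicontinuity) covering
`[0, 1]`, the first containing `0` and the second `1`, so somewhere the chord lies above `u ⊔ v`.
Hence an affine minorant of `u ⊔ v` lying strictly above `u` at one point lies below `v`
everywhere, which gives `∂(u ⊔ v) x ⊆ ∂u x ∪ ∂v x`, and `∂(u ⊔ v) x ⊆ ∂v x` when `u x < v x`.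
Tilting the chord slightly below the minorant `u x + ⟪· - x, y⟫` of `u` shows
`∂u x ⊆ ∂(u ⊓ v) x` when `u x < v x`. The remaining inclusions only compare `u x` with `v x`. -/

theorem IsPreconnected.exists_sup_le_of_inf_le {X β : Type*} [TopologicalSpace X] [LinearOrder β]
    [TopologicalSpace β] [ClosedIciTopology β] {s : Set X} (hs : IsPreconnected s)
    {f₁ f₂ g : X → β} (hf₁ : LowerSemicontinuous f₁) (hf₂ : LowerSemicontinuous f₂)
    (hg : Continuous g) (hinf : ∀ x ∈ s, f₁ x ⊓ f₂ x ≤ g x)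
    {a b : X} (ha : a ∈ s) (hfa : f₁ a ≤ g a) (hb : b ∈ s) (hfb : f₂ b ≤ g b) :
    ∃ x ∈ s, f₁ x ⊔ f₂ x ≤ g x := by
  have hclosed {f : X → β} (hf : LowerSemicontinuous f) : IsClosed {x | f x ≤ g x} :=
    hf.isClosed_epigraph.preimage (continuous_id.prodMk hg)
  obtain ⟨x, hxs, hx₁, hx₂⟩ := isPreconnected_closed_iff.mp hs _ _ (hclosed hf₁) (hclosed hf₂)
    (fun x hx => inf_le_iff.mp (hinf x hx)) ⟨a, ha, hfa⟩ ⟨b, hb, hfb⟩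
  exact ⟨x, hxs, sup_le hx₁ hx₂⟩

theorem EReal.exists_coe_lt_of_lt_add_coe {M p q : EReal} {c d : ℝ} (hp : p < M + c)
    (hq : q < M + d) : ∃ m : ℝ, (m : EReal) < M ∧ p < m + c ∧ q < m + d := by
  obtain ⟨m, hm, hmM⟩ := EReal.exists_between_coe_real
    (max_lt (EReal.sub_lt_of_lt_add hp) (EReal.sub_lt_of_lt_add hq))
  have lt_add {r : EReal} {e : ℝ} (h : r - e < m) : r < m + e :=
    (EReal.sub_lt_iff (.inl (EReal.coe_ne_bot e)) (.inl (EReal.coe_ne_top e))).mp h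
  exact ⟨m, hmM, lt_add ((le_max_left _ _).trans_lt hm), lt_add ((le_max_right _ _).trans_lt hm)⟩

section Subdifferential

open AffineMap Set

variable {n : ℕ} {u v : En n → EReal} {x y : En n}

theorem ConvexFn.le_lineMap {f : En n → EReal} (hf : ConvexFn f) {z : En n} {a b : ℝ}
    (ha : f x ≤ a) (hb : f z ≤ b) {t : ℝ} (ht : t ∈ Icc (0 : ℝ) 1) :
    f (lineMap x z t) ≤ (lineMap a b t : ℝ) := by
  have h := hf (show (x, a) ∈ _ from ha) (show (z, b) ∈ _ from hb) (sub_nonneg.2 ht.2) ht.1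
    (sub_add_cancel 1 t)
  simpa [lineMap_apply_module, Prod.smul_def] using h

theorem exists_sup_le_lineMap_of_convexFn_inf (hul : LowerSemicontinuous u)
    (hvl : LowerSemicontinuous v) (hmin : ConvexFn (u ⊓ v)) {z : En n} {a b : ℝ}
    (ha : u x ≤ a) (hb : v z ≤ b) :
    ∃ t ∈ Icc (0 : ℝ) 1, u (lineMap x z t) ⊔ v (lineMap x z t) ≤ (lineMap a b t : ℝ) := by
  have hseg : Continuous fun t : ℝ => lineMap x z t := AffineMap.lineMap_continuous
  refine isPreconnected_Icc.exists_sup_le_of_inf_le (hul.comp hseg) (hvl.comp hseg)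
    (continuous_coe_real_ereal.comp AffineMap.lineMap_continuous)
    (fun t ht => hmin.le_lineMap (inf_le_left.trans ha) (inf_le_right.trans hb) ht)
    (left_mem_Icc.2 zero_le_one) ?_ (right_mem_Icc.2 zero_le_one) ?_
  · simpa using ha
  · simpa using hb

theorem lineMap_const_add_inner_sub (x y z₀ z : En n) (m t : ℝ) :
    lineMap (m + ⟪z₀ - x, y⟫) (m + ⟪z - x, y⟫) t = m + ⟪lineMap z₀ z t - x, y⟫ := by
  simp only [lineMap_apply_module, smul_eq_mul, inner_sub_left, inner_add_left,
    real_inner_smul_left]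
  ring

theorem affine_le_right_of_affine_le_sup (hul : LowerSemicontinuous u)
    (hvl : LowerSemicontinuous v) (hmin : ConvexFn (u ⊓ v)) {M : EReal} {z₀ : En n}
    (hsup : ∀ w, M + ⟪w - x, y⟫ ≤ (u ⊔ v) w) (h₀ : u z₀ < M + ⟪z₀ - x, y⟫) (z : En n) :
    M + ⟪z - x, y⟫ ≤ v z := by
  by_contra! h₁
  obtain ⟨m, hmM, hm₀, hm₁⟩ := EReal.exists_coe_lt_of_lt_add_coe h₀ h₁
  obtain ⟨t, ht, hle⟩ := exists_sup_le_lineMap_of_convexFn_inf hul hvl hmin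
    (a := m + ⟪z₀ - x, y⟫) (b := m + ⟪z - x, y⟫) hm₀.le hm₁.le
  rw [lineMap_const_add_inner_sub, EReal.coe_add] at hle
  exact ((EReal.add_lt_add_right_coe hmM _).trans_le ((hsup _).trans hle)).false

theorem mem_subdiff_right_of_mem_subdiff_sup (hul : LowerSemicontinuous u)
    (hvl : LowerSemicontinuous v) (hmin : ConvexFn (u ⊓ v)) {z₀ : En n}
    (hy : y ∈ subdiff (u ⊔ v) x) (h₀ : u z₀ < (u x ⊔ v x) + ⟪z₀ - x, y⟫) :
    y ∈ subdiff v x := fun z =>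
  (add_le_add_left le_sup_right _).trans
    (affine_le_right_of_affine_le_sup hul hvl hmin hy h₀ z)

theorem mem_subdiff_inf_of_mem_subdiff_left (hul : LowerSemicontinuous u)
    (hvl : LowerSemicontinuous v) (hmin : ConvexFn (u ⊓ v)) (hy : y ∈ subdiff u x)
    (hlt : u x < v x) : y ∈ subdiff (u ⊓ v) x := by
  intro z
  rw [Pi.inf_apply, Pi.inf_apply, inf_eq_left.2 hlt.le]
  refine le_inf (hy z) ?_
  rcases eq_bot_or_bot_lt (u x) with hbot | hbot
  · simp [hbot]
  by_contra! hz
  set α := (u x).toReal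
  have hα : (α : EReal) = u x := EReal.coe_toReal (hlt.trans_le le_top).ne hbot.ne'
  rw [← hα] at hz hlt
  obtain ⟨b, hzb, hb⟩ := EReal.exists_between_coe_real hz
  obtain ⟨t, ht, hle⟩ := exists_sup_le_lineMap_of_convexFn_inf hul hvl hmin hα.ge hzb.le
  rcases ht.1.eq_or_lt with rfl | htpos
  · simp only [lineMap_apply_zero] at hle
    exact hlt.not_ge (le_sup_right.trans hle)
  · have hyt := (hy (lineMap x z t)).trans (le_sup_left.trans hle)
    rw [← hα, ← EReal.coe_add, EReal.coe_le_coe_iff, ← vsub_eq_sub, lineMap_vsub_left,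
      vsub_eq_sub, real_inner_smul_left, lineMap_apply_module, smul_eq_mul, smul_eq_mul] at hyt
    rw [← EReal.coe_add, EReal.coe_lt_coe_iff] at hb
    nlinarith [mul_pos htpos (sub_pos.2 hb)]

theorem mem_subdiff_left_of_mem_subdiff_inf (hy : y ∈ subdiff (u ⊓ v) x) (hle : u x ≤ v x) :
    y ∈ subdiff u x := fun z => by
  simpa only [Pi.inf_apply, inf_eq_left.2 hle] using (hy z).trans inf_le_left

theorem mem_subdiff_sup_of_mem_subdiff_left (hy : y ∈ subdiff u x) (hle : v x ≤ u x) :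
    y ∈ subdiff (u ⊔ v) x := fun z => by
  simpa only [Pi.sup_apply, sup_eq_left.2 hle] using (hy z).trans le_sup_left

theorem mem_subdiff_sup_of_mem_subdiff_of_mem_subdiff (hu : y ∈ subdiff u x)
    (hv : y ∈ subdiff v x) : y ∈ subdiff (u ⊔ v) x := by
  rcases le_total (v x) (u x) with h | h
  · exact mem_subdiff_sup_of_mem_subdiff_left hu h
  · exact sup_comm v u ▸ mem_subdiff_sup_of_mem_subdiff_left hv h

theorem mem_subdiff_inf_of_mem_subdiff_of_mem_subdiff (hu : y ∈ subdiff u x)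
    (hv : y ∈ subdiff v x) : y ∈ subdiff (u ⊓ v) x := fun z =>
  le_inf ((add_le_add_left inf_le_left _).trans (hu z))
    ((add_le_add_left inf_le_right _).trans (hv z))

theorem mem_subdiff_or_of_mem_subdiff_inf (hy : y ∈ subdiff (u ⊓ v) x) :
    y ∈ subdiff u x ∨ y ∈ subdiff v x := by
  rcases le_total (u x) (v x) with h | h
  · exact .inl (mem_subdiff_left_of_mem_subdiff_inf hy h)
  · exact .inr (mem_subdiff_left_of_mem_subdiff_inf (inf_comm u v ▸ hy) h)

theorem mem_subdiff_or_of_mem_subdiff_sup (hul : LowerSemicontinuous u)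
    (hvl : LowerSemicontinuous v) (hmin : ConvexFn (u ⊓ v)) (hy : y ∈ subdiff (u ⊔ v) x) :
    y ∈ subdiff u x ∨ y ∈ subdiff v x := by
  refine or_iff_not_imp_left.2 fun hu => ?_
  obtain ⟨z₀, hz₀⟩ : ∃ z₀, u z₀ < u x + ⟪z₀ - x, y⟫ := by simpa [subdiff] using hu
  exact mem_subdiff_right_of_mem_subdiff_sup hul hvl hmin hy
    (hz₀.trans_le (add_le_add_left le_sup_left _))

theorem mem_subdiff_sup_or_inf_of_mem_subdiff_left (hul : LowerSemicontinuous u)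
    (hvl : LowerSemicontinuous v) (hmin : ConvexFn (u ⊓ v)) (hy : y ∈ subdiff u x) :
    y ∈ subdiff (u ⊔ v) x ∨ y ∈ subdiff (u ⊓ v) x :=
  (le_or_gt (v x) (u x)).imp (mem_subdiff_sup_of_mem_subdiff_left hy)
    (mem_subdiff_inf_of_mem_subdiff_left hul hvl hmin hy)

theorem mem_subdiff_left_of_mem_subdiff_sup_of_mem_subdiff_inf (hul : LowerSemicontinuous u)
    (hvl : LowerSemicontinuous v) (hmin : ConvexFn (u ⊓ v)) (hsup : y ∈ subdiff (u ⊔ v) x)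
    (hinf : y ∈ subdiff (u ⊓ v) x) : y ∈ subdiff u x := by
  rcases le_or_gt (u x) (v x) with h | h
  · exact mem_subdiff_left_of_mem_subdiff_inf hinf h
  · refine mem_subdiff_right_of_mem_subdiff_sup hvl hul (inf_comm u v ▸ hmin)
      (sup_comm u v ▸ hsup) (z₀ := x) ?_
    simpa [sup_eq_right.2 h.le] using h

theorem mem_subdiff_sup_or_mem_subdiff_inf_iff (hul : LowerSemicontinuous u)
    (hvl : LowerSemicontinuous v) (hmin : ConvexFn (u ⊓ v)) :
    y ∈ subdiff (u ⊔ v) x ∨ y ∈ subdiff (u ⊓ v) x ↔ y ∈ subdiff u x ∨ y ∈ subdiff v x := by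
  constructor
  · rintro (h | h)
    exacts [mem_subdiff_or_of_mem_subdiff_sup hul hvl hmin h, mem_subdiff_or_of_mem_subdiff_inf h]
  · rintro (h | h)
    · exact mem_subdiff_sup_or_inf_of_mem_subdiff_left hul hvl hmin h
    · rw [sup_comm, inf_comm]
      exact mem_subdiff_sup_or_inf_of_mem_subdiff_left hvl hul (inf_comm u v ▸ hmin) h

theorem mem_subdiff_sup_and_mem_subdiff_inf_iff (hul : LowerSemicontinuous u)
    (hvl : LowerSemicontinuous v) (hmin : ConvexFn (u ⊓ v)) :
    y ∈ subdiff (u ⊔ v) x ∧ y ∈ subdiff (u ⊓ v) x ↔ y ∈ subdiff u x ∧ y ∈ subdiff v x := by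
  refine ⟨fun ⟨hsup, hinf⟩ => ⟨?_, ?_⟩, fun ⟨hu, hv⟩ =>
    ⟨mem_subdiff_sup_of_mem_subdiff_of_mem_subdiff hu hv,
      mem_subdiff_inf_of_mem_subdiff_of_mem_subdiff hu hv⟩⟩
  · exact mem_subdiff_left_of_mem_subdiff_sup_of_mem_subdiff_inf hul hvl hmin hsup hinf
  · rw [sup_comm] at hsup
    rw [inf_comm] at hinf hmin
    exact mem_subdiff_left_of_mem_subdiff_sup_of_mem_subdiff_inf hvl hul hmin hsup hinf

end Subdifferential

theorem sgraph_inclusion_exclusion_general (n : ℕ) (u v : En n → EReal)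
    (hul : LowerSemicontinuous u) (hvl : LowerSemicontinuous v)
    (hmin : ConvexFn (fun x => u x ⊓ v x)) :
    sgraph (fun z => u z ⊔ v z) ∪ sgraph (fun z => u z ⊓ v z)
        = sgraph u ∪ sgraph v ∧
      sgraph (fun z => u z ⊔ v z) ∩ sgraph (fun z => u z ⊓ v z)
        = sgraph u ∩ sgraph v :=
  ⟨Set.ext fun _ => mem_subdiff_sup_or_mem_subdiff_inf_iff hul hvl hmin,
    Set.ext fun _ => mem_subdiff_sup_and_mem_subdiff_inf_iff hul hvl hmin⟩

theorem sgraph_inclusion_exclusion (n : ℕ) (u v : En n → EReal)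
    (hu : ConvexFn u) (hv : ConvexFn v)
    (hul : LowerSemicontinuous u) (hvl : LowerSemicontinuous v)
    (hmin : ConvexFn (fun x => u x ⊓ v x)) :
    sgraph (fun z => u z ⊔ v z) ∪ sgraph (fun z => u z ⊓ v z)
        = sgraph u ∪ sgraph v ∧
      sgraph (fun z => u z ⊔ v z) ∩ sgraph (fun z => u z ⊓ v z)
        = sgraph u ∩ sgraph v :=
  sgraph_inclusion_exclusion_general n u v hul hvl hmin
end
end

section
/- Let u, v : ℝⁿ → ℝ ∪ {+∞} be lower semicontinuous convex functions, not identically +∞, with u ∧ v convex. Then for sufficiently small r > 0, reg_r(u ∧ v) = reg_r u ∧ reg_r v and reg_r(u ∨ v) = reg_r u ∨ reg_r v. -/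
open Filter Topology MeasureTheory
open scoped RealInnerProductSpace ENNReal Classical

noncomputable section

/-!
For convex `w` and `r > 0`, `reg_r w` is the Pasch–Hausdorff envelope
`x ↦ inf_z (w z + ‖x - z‖ / r)`: the envelope is convex and `(1/r)`-Lipschitz, hence the
supremum of its affine minorants, and these are exactly the affine minorants of `w` with slope in
`B_{1/r}`. The envelope commutes with `∧` for any pair of functions. For `∨`, take
near-minimisers `z₁` of `u` and `z₂` of `v` and follow the segment between them: since `u ∧ v`
is convex, every point of it lies below the interpolated level for `u` or for `v`, and by lower
semicontinuity and connectedness of `[0, 1]` some point lies below it for both.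
-/

open Set

lemma EReal.exists_le_coe_of_add_coe_lt {t : EReal} {d q : ℝ} (h : t + d < q) :
    ∃ α : ℝ, t ≤ α ∧ α + d < q := by
  induction t using EReal.rec with
  | bot => exact ⟨q - d - 1, bot_le, by linarith⟩
  | coe a => exact ⟨a, le_rfl, by exact_mod_cast h⟩
  | top => simp at h

section Affine

variable {E : Type*} [NormedAddCommGroup E] [InnerProductSpace ℝ E]

lemma ConvexOn.exists_inner_add_le_of_lt [CompleteSpace E] {f : E → ℝ}
    (hf : ConvexOn ℝ univ f) (hfc : LowerSemicontinuous f) {x : E} {a : ℝ} (ha : a < f x) :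
    ∃ (y : E) (b : ℝ), (∀ z, ⟪z, y⟫ + b ≤ f z) ∧ ⟪x, y⟫ + b = a := by
  obtain ⟨l, b, hle, heq⟩ := hf.exists_affine_le_of_lt (𝕜 := ℝ) (mem_univ x) ha isClosed_univ
    (hfc.lowerSemicontinuousOn univ)
  refine ⟨(InnerProductSpace.toDual ℝ E).symm l, b, fun z => ?_, ?_⟩
  · rw [real_inner_comm, InnerProductSpace.toDual_symm_apply]
    simpa using hle ⟨z, trivial⟩
  · rw [real_inner_comm, InnerProductSpace.toDual_symm_apply]
    simpa using heq

lemma norm_le_of_inner_add_le {f : E → ℝ} {c b : ℝ} {x y : E} (hc : 0 ≤ c)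
    (hf : ∀ z, f z ≤ f x + c * ‖z - x‖) (hy : ∀ z, ⟪z, y⟫ + b ≤ f z) : ‖y‖ ≤ c := by
  by_contra! h
  have hA : 0 < ‖y‖ * (‖y‖ - c) := mul_pos (hc.trans_lt h) (sub_pos.2 h)
  set K := f x - ⟪x, y⟫ - b
  set t := (|K| + 1) / (‖y‖ * (‖y‖ - c))
  have ht : 0 ≤ t := by positivity
  have htA : t * (‖y‖ * (‖y‖ - c)) = |K| + 1 := div_mul_cancel₀ _ hA.ne'
  have h₁ := hy (x + t • y)
  have h₂ := hf (x + t • y)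
  rw [inner_add_left, real_inner_smul_left, real_inner_self_eq_norm_sq] at h₁
  rw [add_sub_cancel_left, norm_smul, Real.norm_of_nonneg ht] at h₂
  nlinarith [le_abs_self K]

end Affine

section

variable {n : ℕ}

lemma ConvexFn.le_combo {w : En n → EReal} (hw : ConvexFn w) {z₁ z₂ : En n} {α₁ α₂ a b : ℝ}
    (h₁ : w z₁ ≤ α₁) (h₂ : w z₂ ≤ α₂) (ha : 0 ≤ a) (hb : 0 ≤ b) (hab : a + b = 1) :
    w (a • z₁ + b • z₂) ≤ ((a * α₁ + b * α₂ : ℝ) : EReal) :=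
  hw (x := (z₁, α₁)) (y := (z₂, α₂)) h₁ h₂ ha hb hab

lemma ConvexFn.sup {u v : En n → EReal} (hu : ConvexFn u) (hv : ConvexFn v) :
    ConvexFn (fun x => u x ⊔ v x) := by
  simpa only [ConvexFn, sup_le_iff, ofPred_and] using hu.inter hv

lemma ConvexFn.convexOn_of_eq_coe {g : En n → EReal} {f : En n → ℝ} (hg : ConvexFn g)
    (hf : ∀ x, g x = f x) : ConvexOn ℝ univ f :=
  ⟨convex_univ, fun x _ y _ a b ha hb hab => by
    exact_mod_cast hf (a • x + b • y) ▸ hg.le_combo (hf x).le (hf y).le ha hb hab⟩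

lemma exists_le_and_le_on_segment {u v : En n → EReal}
    (hul : LowerSemicontinuous u) (hvl : LowerSemicontinuous v)
    (hmin : ConvexFn (fun x => u x ⊓ v x)) {z₁ z₂ : En n} {α₁ α₂ : ℝ}
    (h₁ : u z₁ ≤ α₁) (h₂ : v z₂ ≤ α₂) :
    ∃ t ∈ Icc (0 : ℝ) 1,
      u ((1 - t) • z₁ + t • z₂) ≤ (((1 - t) * α₁ + t * α₂ : ℝ) : EReal) ∧
      v ((1 - t) • z₁ + t • z₂) ≤ (((1 - t) * α₁ + t * α₂ : ℝ) : EReal) := by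
  let path : ℝ → En n × EReal := fun t =>
    ((1 - t) • z₁ + t • z₂, (((1 - t) * α₁ + t * α₂ : ℝ) : EReal))
  have hpath : Continuous path :=
    (by fun_prop : Continuous fun t : ℝ => (1 - t) • z₁ + t • z₂).prodMk
      (continuous_coe_real_ereal.comp (by fun_prop))
  have hS := hul.isClosed_epigraph.preimage hpath
  have hT := hvl.isClosed_epigraph.preimage hpath
  have hcover : Icc (0 : ℝ) 1 ⊆ path ⁻¹' {p | u p.1 ≤ p.2} ∪ path ⁻¹' {p | v p.1 ≤ p.2} :=
    fun t ht => inf_le_iff.1 <|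
      hmin.le_combo (inf_le_left.trans h₁) (inf_le_right.trans h₂) (sub_nonneg.2 ht.2) ht.1
        (sub_add_cancel 1 t)
  obtain ⟨t, ht, htu, htv⟩ := isPreconnected_closed_iff.1 isPreconnected_Icc _ _ hS hT hcover
    ⟨0, left_mem_Icc.2 zero_le_one, by simpa [path] using h₁⟩
    ⟨1, right_mem_Icc.2 zero_le_one, by
      simpa only [path, mem_preimage, mem_ofPred_eq, sub_self, zero_mul, one_mul, zero_add,
        zero_smul, one_smul] using h₂⟩
  exact ⟨t, ht, htu, htv⟩

def paschHausdorff (w : En n → EReal) (c : ℝ) (x : En n) : EReal :=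
  ⨅ z, w z + ((c * ‖x - z‖ : ℝ) : EReal)

section paschHausdorff

variable {w : En n → EReal} {c : ℝ}

lemma paschHausdorff_le (w : En n → EReal) (c : ℝ) (x z : En n) :
    paschHausdorff w c x ≤ w z + ((c * ‖x - z‖ : ℝ) : EReal) :=
  iInf_le _ z

lemma exists_le_coe_of_paschHausdorff_lt {x : En n} {q : ℝ} (h : paschHausdorff w c x < q) :
    ∃ z, ∃ α : ℝ, w z ≤ α ∧ α + c * ‖x - z‖ < q := by
  obtain ⟨z, hz⟩ := iInf_lt_iff.1 h
  exact ⟨z, EReal.exists_le_coe_of_add_coe_lt hz⟩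

lemma paschHausdorff_le_combo (hc : 0 ≤ c) {x₁ x₂ z₁ z₂ : En n} {α₁ α₂ a b : ℝ}
    (ha : 0 ≤ a) (hb : 0 ≤ b) (hw : w (a • z₁ + b • z₂) ≤ ((a * α₁ + b * α₂ : ℝ) : EReal)) :
    paschHausdorff w c (a • x₁ + b • x₂) ≤
      ((a * (α₁ + c * ‖x₁ - z₁‖) + b * (α₂ + c * ‖x₂ - z₂‖) : ℝ) : EReal) := by
  have hnorm : ‖(a • x₁ + b • x₂) - (a • z₁ + b • z₂)‖ ≤ a * ‖x₁ - z₁‖ + b * ‖x₂ - z₂‖ := by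
    calc ‖(a • x₁ + b • x₂) - (a • z₁ + b • z₂)‖ = ‖a • (x₁ - z₁) + b • (x₂ - z₂)‖ := by
          rw [smul_sub, smul_sub, add_sub_add_comm]
      _ ≤ a * ‖x₁ - z₁‖ + b * ‖x₂ - z₂‖ := by
          refine (norm_add_le _ _).trans_eq ?_
          rw [norm_smul_of_nonneg ha, norm_smul_of_nonneg hb]
  refine (paschHausdorff_le w c _ _).trans ((add_le_add_left hw _).trans ?_)
  rw [← EReal.coe_add, EReal.coe_le_coe_iff]
  nlinarith [mul_le_mul_of_nonneg_left hnorm hc]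

lemma convexFn_paschHausdorff (hw : ConvexFn w) (hc : 0 ≤ c) :
    ConvexFn (paschHausdorff w c) := by
  rintro ⟨x₁, s₁⟩ (h₁ : paschHausdorff w c x₁ ≤ s₁) ⟨x₂, s₂⟩ (h₂ : paschHausdorff w c x₂ ≤ s₂)
    a b ha hb hab
  show paschHausdorff w c (a • x₁ + b • x₂) ≤ ((a * s₁ + b * s₂ : ℝ) : EReal)
  refine EReal.le_of_forall_lt_iff_le.1 fun q hq => ?_
  set ε := q - (a * s₁ + b * s₂)
  have hε : 0 < ε := sub_pos.2 (by exact_mod_cast hq)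
  obtain ⟨z₁, α₁, hz₁, hα₁⟩ := exists_le_coe_of_paschHausdorff_lt
    (h₁.trans_lt (EReal.coe_lt_coe_iff.2 (lt_add_of_pos_right s₁ hε)))
  obtain ⟨z₂, α₂, hz₂, hα₂⟩ := exists_le_coe_of_paschHausdorff_lt
    (h₂.trans_lt (EReal.coe_lt_coe_iff.2 (lt_add_of_pos_right s₂ hε)))
  refine (paschHausdorff_le_combo hc ha hb (hw.le_combo hz₁ hz₂ ha hb hab)).trans ?_
  rw [EReal.coe_le_coe_iff]
  nlinarith [mul_le_mul_of_nonneg_left hα₁.le ha, mul_le_mul_of_nonneg_left hα₂.le hb]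

lemma paschHausdorff_le_add (hc : 0 ≤ c) (x x' : En n) :
    paschHausdorff w c x ≤ paschHausdorff w c x' + ((c * ‖x - x'‖ : ℝ) : EReal) := by
  rw [← EReal.sub_le_iff_le_add (.inl (EReal.coe_ne_bot _)) (.inl (EReal.coe_ne_top _))]
  refine le_iInf fun z => ?_
  rw [EReal.sub_le_iff_le_add (.inl (EReal.coe_ne_bot _)) (.inl (EReal.coe_ne_top _)), add_assoc,
    ← EReal.coe_add]
  refine (paschHausdorff_le w c x z).trans (add_le_add_right (EReal.coe_le_coe_iff.2 ?_) _)
  nlinarith [norm_sub_le_norm_sub_add_norm_sub x x' z]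

lemma paschHausdorff_eq_coe_toReal (hc : 0 ≤ c) (hwp : ∃ z, w z ≠ ⊤) {x : En n} (hx : paschHausdorff w c x ≠ ⊥) (z : En n) :
    paschHausdorff w c z = (paschHausdorff w c z).toReal := by
  obtain ⟨z₀, hz₀⟩ := hwp
  refine (EReal.coe_toReal (ne_top_of_le_ne_top ?_ (paschHausdorff_le w c z z₀)) fun hz => ?_).symm
  · exact (EReal.add_lt_top hz₀ (EReal.coe_ne_top _)).ne
  · exact hx (le_bot_iff.1 ((paschHausdorff_le_add hc x z).trans (by rw [hz, EReal.bot_add])))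

lemma paschHausdorff_inf (u v : En n → EReal) (c : ℝ) (x : En n) :
    paschHausdorff (fun z => u z ⊓ v z) c x = paschHausdorff u c x ⊓ paschHausdorff v c x := by
  simp only [paschHausdorff, min_add_add_right, ← iInf_inf_eq]

lemma paschHausdorff_sup {u v : En n → EReal} (hul : LowerSemicontinuous u)
    (hvl : LowerSemicontinuous v) (hmin : ConvexFn (fun x => u x ⊓ v x)) (hc : 0 ≤ c)
    (x : En n) :
    paschHausdorff (fun z => u z ⊔ v z) c x = paschHausdorff u c x ⊔ paschHausdorff v c x := by
  refine le_antisymm (EReal.le_of_forall_lt_iff_le.1 fun q hq => ?_)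
    (sup_le (iInf_mono fun z => add_le_add_left le_sup_left _)
      (iInf_mono fun z => add_le_add_left le_sup_right _))
  obtain ⟨z₁, α₁, hz₁, hα₁⟩ := exists_le_coe_of_paschHausdorff_lt (sup_lt_iff.1 hq).1
  obtain ⟨z₂, α₂, hz₂, hα₂⟩ := exists_le_coe_of_paschHausdorff_lt (sup_lt_iff.1 hq).2
  obtain ⟨t, ht, hut, hvt⟩ := exists_le_and_le_on_segment hul hvl hmin hz₁ hz₂
  have hcombo := paschHausdorff_le_combo (w := fun z => u z ⊔ v z) (x₁ := x) (x₂ := x) hc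
    (sub_nonneg.2 ht.2) ht.1 (sup_le hut hvt)
  rw [Convex.combo_self (sub_add_cancel 1 t)] at hcombo
  refine hcombo.trans (EReal.coe_le_coe_iff.2 ?_)
  nlinarith [mul_le_mul_of_nonneg_left hα₁.le (sub_nonneg.2 ht.2),
    mul_le_mul_of_nonneg_left hα₂.le ht.1]

end paschHausdorff

section regLip

lemma indFn_ne_bot (K : Set (En n)) (y : En n) : indFn K y ≠ ⊥ := by
  unfold indFn; split_ifs <;> simp

variable {w : En n → EReal} {r : ℝ}

lemma conj_le_of_inner_add_le {y : En n} {b : ℝ} (h : ∀ z, ((⟪z, y⟫ + b : ℝ) : EReal) ≤ w z) :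
    conj w y ≤ ((-b : ℝ) : EReal) := by
  refine iSup_le fun z => ?_
  rw [EReal.sub_le_iff_le_add (.inr (EReal.coe_ne_top _)) (.inr (EReal.coe_ne_bot _))]
  calc (⟪z, y⟫ : EReal) = ((-b : ℝ) : EReal) + ((⟪z, y⟫ + b : ℝ) : EReal) := by
        rw [← EReal.coe_add]; ring_nf
    _ ≤ ((-b : ℝ) : EReal) + w z := by gcongr; exact h z

lemma le_regLip_of_inner_add_le {y : En n} {b : ℝ} (hy : ‖y‖ ≤ 1 / r)
    (h : ∀ z, ((⟪z, y⟫ + b : ℝ) : EReal) ≤ w z) (x : En n) :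
    ((⟪x, y⟫ + b : ℝ) : EReal) ≤ regLip w r x := by
  rw [regLip, conj]
  refine le_iSup_of_le y ?_
  rw [indFn, if_pos (mem_closedBall_zero_iff.2 hy), add_zero]
  calc ((⟪x, y⟫ + b : ℝ) : EReal) = (⟪y, x⟫ : EReal) - ((-b : ℝ) : EReal) := by
        rw [← EReal.coe_sub, real_inner_comm]; ring_nf
    _ ≤ (⟪y, x⟫ : EReal) - conj w y := EReal.sub_le_sub le_rfl (conj_le_of_inner_add_le h)

lemma regLip_le_paschHausdorff (w : En n → EReal) (r : ℝ) (x : En n) :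
    regLip w r x ≤ paschHausdorff w (1 / r) x := by
  rw [regLip, conj]
  refine iSup_le fun y => le_iInf fun z => ?_
  have hconj : (⟪z, y⟫ : EReal) - w z ≤ conj w y := le_iSup (fun z => (⟪z, y⟫ : EReal) - w z) z
  induction hwz : w z using EReal.rec with
  | bot =>
    rw [hwz, EReal.sub_bot (EReal.coe_ne_bot _), top_le_iff] at hconj
    rw [hconj, EReal.top_add_of_ne_bot (indFn_ne_bot _ _), EReal.sub_top]
    exact bot_le
  | top => exact (EReal.top_add_of_ne_bot (EReal.coe_ne_bot _)).symm ▸ le_top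
  | coe ω =>
    rw [hwz, ← EReal.coe_sub] at hconj
    by_cases hy : y ∈ Metric.closedBall (0 : En n) (1 / r)
    · rw [indFn, if_pos hy, add_zero]
      refine (EReal.sub_le_sub le_rfl hconj).trans ?_
      rw [← EReal.coe_sub, ← EReal.coe_add, EReal.coe_le_coe_iff, real_inner_comm y z]
      have hyx := real_inner_le_norm y (x - z)
      rw [inner_sub_right] at hyx
      nlinarith [mul_le_mul_of_nonneg_right (mem_closedBall_zero_iff.1 hy) (norm_nonneg (x - z))]
    · rw [indFn, if_neg hy,
        EReal.add_top_of_ne_bot (ne_bot_of_le_ne_bot (EReal.coe_ne_bot _) hconj), EReal.sub_top]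
      exact bot_le

lemma paschHausdorff_le_regLip (hw : ConvexFn w) (hr : 0 < r) (x : En n) :
    paschHausdorff w (1 / r) x ≤ regLip w r x := by
  have hc : (0 : ℝ) ≤ 1 / r := by positivity
  rcases eq_or_ne (paschHausdorff w (1 / r) x) ⊥ with hbot | hbot
  · exact hbot ▸ bot_le
  by_cases htop : ∀ z, w z = ⊤
  · have hb (b : ℝ) : (b : EReal) ≤ regLip w r x := by
      simpa using le_regLip_of_inner_add_le (y := 0) (b := b) (by simpa using hc)
        (fun z => htop z ▸ le_top) x
    exact (EReal.eq_top_iff_forall_lt _).2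
      (fun b => (EReal.coe_lt_coe_iff.2 (lt_add_one b)).trans_le (hb _)) ▸ le_top
  set f : En n → ℝ := fun z => (paschHausdorff w (1 / r) z).toReal
  have hf := paschHausdorff_eq_coe_toReal hc (not_forall.1 htop) hbot
  have hlip (a b : En n) : f a ≤ f b + 1 / r * ‖a - b‖ := by
    exact_mod_cast hf a ▸ hf b ▸ paschHausdorff_le_add hc a b
  have hcont : Continuous f :=
    (LipschitzWith.of_le_add_mul' _ fun a b => dist_eq_norm a b ▸ hlip a b).continuous
  have hfw (z : En n) : (f z : EReal) ≤ w z := by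
    have := paschHausdorff_le w (1 / r) z z
    rwa [sub_self, norm_zero, mul_zero, EReal.coe_zero, add_zero, hf z] at this
  rw [hf x]
  refine EReal.ge_of_forall_gt_iff_ge.1 fun a ha => ?_
  obtain ⟨y, b, hyf, rfl⟩ := ((convexFn_paschHausdorff hw hc).convexOn_of_eq_coe hf
    ).exists_inner_add_le_of_lt hcont.lowerSemicontinuous (EReal.coe_lt_coe_iff.1 ha)
  exact le_regLip_of_inner_add_le (norm_le_of_inner_add_le hc (hlip · x) hyf)
    (fun z => (EReal.coe_le_coe_iff.2 (hyf z)).trans (hfw z)) x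

theorem regLip_eq_paschHausdorff (hw : ConvexFn w) (hr : 0 < r) :
    regLip w r = paschHausdorff w (1 / r) :=
  funext fun x => (regLip_le_paschHausdorff w r x).antisymm (paschHausdorff_le_regLip hw hr x)

end regLip

end

theorem regLip_min_max_general (n : ℕ) (u v : En n → EReal)
    (hu : ConvexFn u) (hv : ConvexFn v)
    (hul : LowerSemicontinuous u) (hvl : LowerSemicontinuous v)
    (hmin : ConvexFn (fun x => u x ⊓ v x)) :
    ∃ r₀ > (0 : ℝ), ∀ r, 0 < r → r ≤ r₀ →
      (regLip (fun x => u x ⊓ v x) r = fun x => regLip u r x ⊓ regLip v r x) ∧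
      (regLip (fun x => u x ⊔ v x) r = fun x => regLip u r x ⊔ regLip v r x) := by
  refine ⟨1, one_pos, fun r hr _ => ?_⟩
  simp only [regLip_eq_paschHausdorff hu hr, regLip_eq_paschHausdorff hv hr,
    regLip_eq_paschHausdorff hmin hr, regLip_eq_paschHausdorff (hu.sup hv) hr]
  exact ⟨funext (paschHausdorff_inf u v _),
    funext (paschHausdorff_sup hul hvl hmin (by positivity))⟩

theorem regLip_min_max (n : ℕ) (u v : En n → EReal)
    (hu : ConvexFn u) (hv : ConvexFn v)
    (hul : LowerSemicontinuous u) (hvl : LowerSemicontinuous v)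
    (hup : ∃ x, u x ≠ ⊤) (hvp : ∃ x, v x ≠ ⊤)
    (hmin : ConvexFn (fun x => u x ⊓ v x)) :
    ∃ r₀ > (0 : ℝ), ∀ r, 0 < r → r ≤ r₀ →
      (regLip (fun x => u x ⊓ v x) r = fun x => regLip u r x ⊓ regLip v r x) ∧
      (regLip (fun x => u x ⊔ v x) r = fun x => regLip u r x ⊔ regLip v r x) :=
  regLip_min_max_general n u v hu hv hul hvl hmin
end
end

section
/- Let u : ℝⁿ → ℝ ∪ {+∞} be lower semicontinuous, convex, and not identically +∞. Let η ⊂ ℝⁿ × ℝⁿ be compact and s > 0. If a sequence (u_k) of such convex functions epi-converges to u, then limsup_{k→∞} Hⁿ(P_s(u_k, η)) ≤ Hⁿ(P_s(u, η)). Moreover, the set P_s(u, η) is compact. -/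
open Filter Topology MeasureTheory
open scoped RealInnerProductSpace ENNReal Classical

noncomputable section

/-- Epi-convergence of a sequence of `EReal`-valued functions. -/
def EpiConverges {n : ℕ} (uk : ℕ → En n → EReal) (u : En n → EReal) : Prop :=
  ∀ x : En n,
    (∀ xk : ℕ → En n, Filter.Tendsto xk Filter.atTop (nhds x) →
        u x ≤ Filter.liminf (fun k => uk k (xk k)) Filter.atTop) ∧
    (∃ xk : ℕ → En n, Filter.Tendsto xk Filter.atTop (nhds x) ∧
        Filter.Tendsto (fun k => uk k (xk k)) Filter.atTop (nhds (u x)))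

/-!
Epi-convergence makes the subdifferential graphs upper semicontinuous: if `(x_k, y_k) → (x, y)`
with `y_k ∈ ∂u_k(x_k)`, then the liminf inequality at `x` together with recovery sequences at
every `z` pass the subgradient inequality to the limit, so `y ∈ ∂u(x)`. Since `η` is compact,
a sequence of points of `P_s(u_k, η)` outside an open `U ⊇ P_s(u, η)` would have a limit point
in `P_s(u, η) \ U`; hence `P_s(u_k, η) ⊆ U` eventually, and outer regularity of Lebesgue measure
gives the limsup bound. The case `u_k = u` (a lower semicontinuous `u` is its own epi-limit)
shows that the graph of `∂u` is closed, so `P_s(u, η)` is a continuous image of a compact set.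
-/

open Set

theorem limsup_measure_le_of_eventually_subset_isOpen {X ι : Type*} [TopologicalSpace X]
    [MeasurableSpace X] (μ : Measure X) [μ.OuterRegular] {l : Filter ι} {A : Set X}
    {B : ι → Set X} (h : ∀ U, IsOpen U → A ⊆ U → ∀ᶠ i in l, B i ⊆ U) :
    limsup (fun i => μ (B i)) l ≤ μ A := by
  rw [A.measure_eq_iInf_isOpen μ]
  refine le_iInf₂ fun U hAU => le_iInf fun hU => ?_
  exact limsup_le_of_le (by isBoundedDefault) ((h U hU hAU).mono fun i hi => measure_mono hi)

theorem tendsto_extend_of_strictMono {X : Type*} [TopologicalSpace X] {σ : ℕ → ℕ}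
    (hσ : StrictMono σ) {f : ℕ → X} {x : X} (hf : Tendsto f atTop (𝓝 x)) :
    Tendsto (Function.extend σ f fun _ => x) atTop (𝓝 x) := by
  refine fun V hV => ?_
  obtain ⟨K, hK⟩ := eventually_atTop.1 (hf hV)
  refine eventually_atTop.2 ⟨σ K, fun j hj => ?_⟩
  by_cases hjσ : ∃ k, σ k = j
  · obtain ⟨k, rfl⟩ := hjσ
    rw [hσ.injective.extend_apply]
    exact hK k (hσ.le_iff_le.1 hj)
  · rw [Function.extend_apply' _ _ _ hjσ]
    exact mem_of_mem_nhds hV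

theorem LowerSemicontinuous.epiConverges_const {n : ℕ} {u : En n → EReal}
    (hu : LowerSemicontinuous u) : EpiConverges (fun _ => u) u := fun x =>
  ⟨fun _ hxk => (hu.le_liminf x).trans hxk.liminf_le_liminf_comp,
    ⟨fun _ => x, tendsto_const_nhds, tendsto_const_nhds⟩⟩

namespace EpiConverges

variable {n : ℕ} {uk : ℕ → En n → EReal} {u : En n → EReal}

theorem comp_strictMono (h : EpiConverges uk u) {σ : ℕ → ℕ} (hσ : StrictMono σ) :
    EpiConverges (uk ∘ σ) u := by
  intro x
  refine ⟨fun xk hxk => ?_, ?_⟩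
  · -- Fill the gaps of the subsequence with `x` to get a full sequence converging to `x`.
    set X := Function.extend σ xk fun _ => x
    have hXσ : ∀ k, X (σ k) = xk k := hσ.injective.extend_apply _ _
    calc u x ≤ liminf (fun j => uk j (X j)) atTop :=
          (h x).1 X (tendsto_extend_of_strictMono hσ hxk)
      _ ≤ liminf ((fun j => uk j (X j)) ∘ σ) atTop := hσ.tendsto_atTop.liminf_le_liminf_comp
      _ = liminf (fun k => (uk ∘ σ) k (xk k)) atTop := by simp only [Function.comp_def, hXσ]
  · obtain ⟨xk, hxk, hk⟩ := (h x).2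
    exact ⟨xk ∘ σ, hxk.comp hσ.tendsto_atTop, hk.comp hσ.tendsto_atTop⟩

theorem mem_sgraph_of_tendsto (h : EpiConverges uk u) {p : En n × En n} {pk : ℕ → En n × En n}
    (hp : Tendsto pk atTop (𝓝 p)) (hpk : ∀ k, pk k ∈ sgraph (uk k)) : p ∈ sgraph u := by
  intro z
  obtain ⟨zk, hz, hrec⟩ := (h z).2
  have hinner : Tendsto (fun k => ((⟪zk k - (pk k).1, (pk k).2⟫ : ℝ) : EReal)) atTop
      (𝓝 (⟪z - p.1, p.2⟫ : ℝ)) :=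
    (continuous_coe_real_ereal.tendsto _).comp ((hz.sub hp.fst_nhds).inner hp.snd_nhds)
  calc u p.1 + ((⟪z - p.1, p.2⟫ : ℝ) : EReal)
      ≤ liminf (fun k => uk k (pk k).1) atTop
          + liminf (fun k => ((⟪zk k - (pk k).1, (pk k).2⟫ : ℝ) : EReal)) atTop :=
        add_le_add ((h p.1).1 _ hp.fst_nhds) hinner.liminf_eq.ge
    _ ≤ liminf (fun k => uk k (pk k).1 + ((⟪zk k - (pk k).1, (pk k).2⟫ : ℝ) : EReal))
          atTop :=
        EReal.le_liminf_add
    _ ≤ liminf (fun k => uk k (zk k)) atTop :=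
        liminf_le_liminf (Eventually.of_forall fun k => hpk k (zk k))
    _ = u z := hrec.liminf_eq

theorem eventually_inter_sgraph_subset (h : EpiConverges uk u) {K W : Set (En n × En n)}
    (hK : IsCompact K) (hW : IsOpen W) (hKW : K ∩ sgraph u ⊆ W) :
    ∀ᶠ k in atTop, K ∩ sgraph (uk k) ⊆ W := by
  by_contra hnot
  obtain ⟨φ, hφ, hbad⟩ :=
    extraction_of_frequently_atTop ((not_eventually.1 hnot).mono fun _ hk => not_subset.1 hk)
  choose p hp hpW using hbad
  obtain ⟨q, hqK, ψ, hψ, hq⟩ := hK.tendsto_subseq fun j => (hp j).1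
  have hq_sgraph : q ∈ sgraph u :=
    (h.comp_strictMono (hφ.comp hψ)).mem_sgraph_of_tendsto hq fun j => (hp (ψ j)).2
  exact hW.isClosed_compl.mem_of_tendsto hq (Eventually.of_forall fun j => hpW (ψ j))
    (hKW ⟨hqK, hq_sgraph⟩)

end EpiConverges

theorem LowerSemicontinuous.isClosed_sgraph {n : ℕ} {u : En n → EReal}
    (hu : LowerSemicontinuous u) : IsClosed (sgraph u) :=
  IsSeqClosed.isClosed fun _ _ hpk hp => hu.epiConverges_const.mem_sgraph_of_tendsto hp hpk

section ParallelSet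

variable {n : ℕ} {u : En n → EReal} {η : Set (En n × En n)} {s : ℝ}

theorem parallelSet_eq_image :
    parallelSet u η s = (fun p : En n × En n => p.1 + s • p.2) '' (η ∩ sgraph u) := by
  ext z
  constructor
  · rintro ⟨p, hpη, hp, rfl⟩
    exact ⟨p, ⟨hpη, hp⟩, rfl⟩
  · rintro ⟨p, ⟨hpη, hp⟩, rfl⟩
    exact ⟨p, hpη, hp, rfl⟩

theorem isCompact_parallelSet (hu : LowerSemicontinuous u) (hη : IsCompact η) :
    IsCompact (parallelSet u η s) := by
  rw [parallelSet_eq_image]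
  exact (hη.inter_right hu.isClosed_sgraph).image (by fun_prop)

theorem EpiConverges.eventually_parallelSet_subset {uk : ℕ → En n → EReal}
    (h : EpiConverges uk u) (hη : IsCompact η) {U : Set (En n)} (hU : IsOpen U)
    (hPU : parallelSet u η s ⊆ U) : ∀ᶠ k in atTop, parallelSet (uk k) η s ⊆ U := by
  simp only [parallelSet_eq_image, image_subset_iff] at hPU ⊢
  exact h.eventually_inter_sgraph_subset hη (hU.preimage (by fun_prop)) hPU

end ParallelSet

theorem limsup_volume_parallelSet_general (n : ℕ) (u : En n → EReal) (uk : ℕ → En n → EReal)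
    (hul : LowerSemicontinuous u)
    (η : Set (En n × En n)) (hη : IsCompact η) (s : ℝ)
    (hconv : EpiConverges uk u) :
    Filter.limsup (fun k => volume (parallelSet (uk k) η s)) Filter.atTop
        ≤ volume (parallelSet u η s) ∧
      IsCompact (parallelSet u η s) :=
  ⟨limsup_measure_le_of_eventually_subset_isOpen volume fun _ hU hPU =>
      hconv.eventually_parallelSet_subset hη hU hPU,
    isCompact_parallelSet hul hη⟩

theorem limsup_volume_parallelSet (n : ℕ) (u : En n → EReal) (uk : ℕ → En n → EReal)
    (hu : ConvexFn u) (hul : LowerSemicontinuous u) (hup : ∃ x, u x ≠ ⊤)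
    (huk : ∀ k, ConvexFn (uk k)) (hukl : ∀ k, LowerSemicontinuous (uk k))
    (hukp : ∀ k, ∃ x, uk k x ≠ ⊤)
    (η : Set (En n × En n)) (hη : IsCompact η) (s : ℝ) (hs : 0 < s)
    (hconv : EpiConverges uk u) :
    Filter.limsup (fun k => volume (parallelSet (uk k) η s)) Filter.atTop
        ≤ volume (parallelSet u η s) ∧
      IsCompact (parallelSet u η s) :=
  limsup_volume_parallelSet_general n u uk hul η hη s hconv
end
end
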